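/- arXiv:2601.01707 — 4 statements merged into one kernel-verified Lean document; each statement's English description precedes it below -/
import Mathlib

section
/- (Lemma 6.6: mixed twin–singular relation follows from the reduced presentation.) In the reduced presentation setup (see context) with n ≥ 4, for all 1 ≤ i, j ≤ n−1 with |i−j| = 1 the relation s_j s_i τ_j = τ_i s_j s_i holds. -/
/-- The ascending product `ν_a ν_{a+1} ⋯ ν_b` (equal to `1` if `b < a`). -/
def ascProd {G : Type*} [Monoid G] (ν : ℕ → G) (a b : ℕ) : G :=
  ((List.range' a (b + 1 - a)).map ν).prod

/-- The descending product `ν_a ν_{a-1} ⋯ ν_b` (equal to `1` if `a < b`). -/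
def descProd {G : Type*} [Monoid G] (ν : ℕ → G) (a b : ℕ) : G :=
  ((List.range' b (a + 1 - b)).reverse.map ν).prod

/-- `sgen ν s1 k` is the element `s_k` of the reduced presentation:
`s_1 = s1` and `s_k = (ν_{k-1} ⋯ ν_1)(ν_k ⋯ ν_2) s1 (ν_2 ⋯ ν_k)(ν_1 ⋯ ν_{k-1})`
for `k ≥ 2`. -/
def sgen {G : Type*} [Monoid G] (ν : ℕ → G) (s1 : G) (k : ℕ) : G :=
  descProd ν (k - 1) 1 * descProd ν k 2 * s1 * ascProd ν 2 k * ascProd ν 1 (k - 1)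

/-- `tgen ν t1 k` is the element `τ_k` of the reduced presentation, defined as for
`sgen` with `τ₁ = t1` in place of `s₁`. -/
def tgen {G : Type*} [Monoid G] (ν : ℕ → G) (t1 : G) (k : ℕ) : G :=
  descProd ν (k - 1) 1 * descProd ν k 2 * t1 * ascProd ν 2 k * ascProd ν 1 (k - 1)

section Helpers
variable {G : Type*}

lemma descProd_succ [Monoid G] (ν : ℕ → G) (a m : ℕ) (h : a ≤ m + 1) :
    descProd ν (m+1) a = ν (m+1) * descProd ν m a := by
  unfold descProd
  have h1 : m + 1 + 1 - a = (m + 1 - a) + 1 := by omega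
  have h2 : a + 1 * (m + 1 - a) = m + 1 := by omega
  rw [h1, List.range'_concat, h2, List.reverse_append, List.reverse_singleton,
    List.singleton_append, List.map_cons, List.prod_cons]

lemma ascProd_succ [Monoid G] (ν : ℕ → G) (a m : ℕ) (h : a ≤ m + 1) :
    ascProd ν a (m+1) = ascProd ν a m * ν (m+1) := by
  unfold ascProd
  have h1 : m + 1 + 1 - a = (m + 1 - a) + 1 := by omega
  have h2 : a + 1 * (m + 1 - a) = m + 1 := by omega
  rw [h1, List.range'_concat, h2, List.map_append, List.prod_append, List.map_singleton,
    List.prod_singleton]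

lemma sgen_one [Monoid G] (ν : ℕ → G) (x : G) : sgen ν x 1 = x := by
  simp [sgen, descProd, ascProd, List.range']

lemma commute_descProd [Monoid G] (ν : ℕ → G) (c : G) (a b : ℕ)
    (hcomm : ∀ j, b ≤ j → j ≤ a → Commute c (ν j)) :
    Commute c (descProd ν a b) := by
  unfold descProd
  refine Commute.list_prod_right _ _ (fun y hy => ?_)
  simp only [List.mem_map, List.mem_reverse, List.mem_range'_1] at hy
  obtain ⟨j, ⟨hj1, hj2⟩, rfl⟩ := hy
  exact hcomm j hj1 (by omega)

lemma commute_ascProd [Monoid G] (ν : ℕ → G) (c : G) (a b : ℕ)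
    (hcomm : ∀ j, a ≤ j → j ≤ b → Commute c (ν j)) :
    Commute c (ascProd ν a b) := by
  unfold ascProd
  refine Commute.list_prod_right _ _ (fun y hy => ?_)
  simp only [List.mem_map, List.mem_range'_1] at hy
  obtain ⟨j, ⟨hj1, hj2⟩, rfl⟩ := hy
  exact hcomm j hj1 (by omega)

lemma sgen_rec_aux [Monoid G] (ν : ℕ → G) (x : G) (k : ℕ)
    (hcomm : ∀ j, 1 ≤ j → j ≤ k → ν (k+2) * ν j = ν j * ν (k+2)) :
    sgen ν x (k+2) = ν (k+1) * ν (k+2) * sgen ν x (k+1) * ν (k+2) * ν (k+1) := by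
  have hd : Commute (ν (k+2)) (descProd ν k 1) :=
    commute_descProd ν _ _ _ (fun j hj1 hj2 => hcomm j hj1 hj2)
  have ha : Commute (ν (k+2)) (ascProd ν 1 k) :=
    commute_ascProd ν _ _ _ (fun j hj1 hj2 => hcomm j hj1 hj2)
  show descProd ν (k+2-1) 1 * descProd ν (k+2) 2 * x * ascProd ν 2 (k+2) * ascProd ν 1 (k+2-1)
    = _
  rw [show k+2-1 = k+1 from rfl]
  rw [descProd_succ ν 1 k (by omega), descProd_succ ν 2 (k+1) (by omega),
      ascProd_succ ν 2 (k+1) (by omega), ascProd_succ ν 1 k (by omega)]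
  show _ = ν (k+1) * ν (k+2) *
    (descProd ν (k+1-1) 1 * descProd ν (k+1) 2 * x * ascProd ν 2 (k+1) * ascProd ν 1 (k+1-1))
    * ν (k+2) * ν (k+1)
  rw [show k+1-1 = k from rfl]
  have m1 : ∀ y : G, descProd ν k 1 * (ν (k+2) * y) = ν (k+2) * (descProd ν k 1 * y) := by
    intro y; rw [← mul_assoc, ← hd.eq, mul_assoc]
  have m2 : ∀ y : G, ν (k+2) * (ascProd ν 1 k * y) = ascProd ν 1 k * (ν (k+2) * y) := by
    intro y; rw [← mul_assoc, ha.eq, mul_assoc]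
  simp only [mul_assoc]
  rw [m1, m2]

lemma braid_conj [Group G] (a b c S : G)
    (hab : a * b * a = b * a * b) (hbc : b * c * b = c * b * c)
    (hac : a * c = c * a) (hcS : c * S = S * c) :
    a * (b * c * (a * b * S * b * a) * c * b) = (b * c * (a * b * S * b * a) * c * b) * a := by
  have rac : ∀ y : G, a * (c * y) = c * (a * y) := fun y => by
    rw [← mul_assoc, hac, mul_assoc]
  have rab : ∀ y : G, a * (b * (a * y)) = b * (a * (b * y)) := fun y => by
    rw [← mul_assoc, ← mul_assoc, hab, mul_assoc, mul_assoc]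
  have rbc : ∀ y : G, b * (c * (b * y)) = c * (b * (c * y)) := fun y => by
    rw [← mul_assoc, ← mul_assoc, hbc, mul_assoc, mul_assoc]
  have rcS : ∀ y : G, c * (S * y) = S * (c * y) := fun y => by
    rw [← mul_assoc, hcS, mul_assoc]
  have I1 : ∀ y : G, a * (b * (c * (a * (b * y)))) = b * (c * (a * (b * (c * y)))) := by
    intro y
    calc a * (b * (c * (a * (b * y))))
        = a * (b * (a * (c * (b * y)))) := by rw [rac (b * y)]
      _ = b * (a * (b * (c * (b * y)))) := rab _
      _ = b * (a * (c * (b * (c * y)))) := by rw [rbc y]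
      _ = b * (c * (a * (b * (c * y)))) := by rw [rac (b * (c * y))]
  have I2 : ∀ y : G, c * (b * (a * (c * (b * y)))) = b * (a * (c * (b * (a * y)))) := by
    intro y
    calc c * (b * (a * (c * (b * y))))
        = c * (b * (c * (a * (b * y)))) := by rw [rac (b * y)]
      _ = b * (c * (b * (a * (b * y)))) := by rw [← rbc (a * (b * y))]
      _ = b * (c * (a * (b * (a * y)))) := by rw [← rab y]
      _ = b * (a * (c * (b * (a * y)))) := by rw [rac (b * (a * y))]
  simp only [mul_assoc]
  calc a * (b * (c * (a * (b * (S * (b * (a * (c * b))))))))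
      = b * (c * (a * (b * (c * (S * (b * (a * (c * b)))))))) := I1 _
    _ = b * (c * (a * (b * (S * (c * (b * (a * (c * b)))))))) := by rw [rcS]
    _ = b * (c * (a * (b * (S * (b * (a * (c * (b * a)))))))) := by
        have I2' : c * (b * (a * (c * b))) = b * (a * (c * (b * a))) := by
          have := I2 1; simpa using this
        rw [I2']
end Helpers

/-- (Lemma 6.6.) The mixed twin–singular relations `s_j s_i τ_j = τ_i s_j s_i` for
`|i - j| = 1` follow from the reduced presentation. -/
theorem mixed_twin_singular_relation {G : Type*} [Group G] (n : ℕ) (hn : 4 ≤ n)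
    (s1 t1 : G) (ν : ℕ → G)
    (hν2 : ∀ i, 1 ≤ i → i ≤ n - 1 → ν i * ν i = 1)
    (hs2 : s1 * s1 = 1)
    (hbraid : ∀ i j, 1 ≤ i → i ≤ n - 1 → 1 ≤ j → j ≤ n - 1 →
      (i + 1 = j ∨ j + 1 = i) → ν i * ν j * ν i = ν j * ν i * ν j)
    (hfar : ∀ i j, 1 ≤ i → i ≤ n - 1 → 1 ≤ j → j ≤ n - 1 →
      (i + 2 ≤ j ∨ j + 2 ≤ i) → ν i * ν j = ν j * ν i)
    (hst : s1 * t1 = t1 * s1)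
    (htν : ∀ i, 3 ≤ i → i ≤ n - 1 → t1 * ν i = ν i * t1)
    (hsν : ∀ i, 3 ≤ i → i ≤ n - 1 → s1 * ν i = ν i * s1)
    (hr41 : t1 * (ν 1 * ν 2 * s1 * ν 2 * ν 1) * s1
      = (ν 1 * ν 2 * s1 * ν 2 * ν 1) * s1 * (ν 1 * ν 2 * t1 * ν 2 * ν 1))
    (hr42 : s1 * (ν 2 * ν 3 * ν 1 * ν 2 * s1 * ν 2 * ν 1 * ν 3 * ν 2)
      = (ν 2 * ν 3 * ν 1 * ν 2 * s1 * ν 2 * ν 1 * ν 3 * ν 2) * s1)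
    (hr43 : t1 * (ν 2 * ν 3 * ν 1 * ν 2 * s1 * ν 2 * ν 1 * ν 3 * ν 2)
      = (ν 2 * ν 3 * ν 1 * ν 2 * s1 * ν 2 * ν 1 * ν 3 * ν 2) * t1)
    (hr44 : t1 * (ν 2 * ν 3 * ν 1 * ν 2 * t1 * ν 2 * ν 1 * ν 3 * ν 2)
      = (ν 2 * ν 3 * ν 1 * ν 2 * t1 * ν 2 * ν 1 * ν 3 * ν 2) * t1)
    : ∀ i j, 1 ≤ i → i ≤ n - 1 → 1 ≤ j → j ≤ n - 1 → (i + 1 = j ∨ j + 1 = i) →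
      sgen ν s1 j * sgen ν s1 i * tgen ν t1 j
        = tgen ν t1 i * sgen ν s1 j * sgen ν s1 i := by
  -- basic cancellation helper
  have hb2 : ∀ j, 1 ≤ j → j ≤ n - 1 → ∀ y : G, ν j * (ν j * y) = y := fun j h1 h2 y => by
    rw [← mul_assoc, hν2 j h1 h2, one_mul]
  -- recursion formula for the generators
  have hrec : ∀ (x : G) (m : ℕ), 2 ≤ m → m ≤ n - 1 →
      sgen ν x m = ν (m-1) * ν m * sgen ν x (m-1) * ν m * ν (m-1) := by
    intro x m h2 hm
    obtain ⟨k, rfl⟩ : ∃ k, m = k + 2 := ⟨m - 2, by omega⟩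
    have h := sgen_rec_aux ν x k
      (fun j hj1 hj2 => hfar (k+2) j (by omega) (by omega) hj1 (by omega) (Or.inr (by omega)))
    rw [show k+2-1 = k+1 from rfl]
    exact h
  -- commutation with higher-index ν's
  have cHigh : ∀ (x : G), (∀ i, 3 ≤ i → i ≤ n - 1 → x * ν i = ν i * x) →
      ∀ m k, 1 ≤ m → m + 2 ≤ k → k ≤ n - 1 → Commute (ν k) (sgen ν x m) := by
    intro x hx m
    induction m with
    | zero => intro k h1 _ _; exact absurd h1 (by omega)
    | succ p ih =>
      intro k h1 h2 h3
      rcases Nat.eq_zero_or_pos p with rfl | hp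
      · rw [sgen_one]
        exact (commute_iff_eq _ _).mpr (hx k (by omega) h3).symm
      · have hr := hrec x (p+1) (by omega) (by omega)
        rw [hr, show p+1-1 = p from rfl]
        have c1 : Commute (ν k) (ν p) :=
          (commute_iff_eq _ _).mpr (hfar k p (by omega) h3 (by omega) (by omega) (Or.inr (by omega)))
        have c2 : Commute (ν k) (ν (p+1)) :=
          (commute_iff_eq _ _).mpr (hfar k (p+1) (by omega) h3 (by omega) (by omega) (Or.inr (by omega)))
        have c3 : Commute (ν k) (sgen ν x p) := ih k hp (by omega) h3
        exact (((c1.mul_right c2).mul_right c3).mul_right c2).mul_right c1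
  -- commutation with lower-index ν's
  have cLow : ∀ (x : G), (∀ i, 3 ≤ i → i ≤ n - 1 → x * ν i = ν i * x) →
      ∀ k, 1 ≤ k → ∀ m, k + 2 ≤ m → m ≤ n - 1 → Commute (ν k) (sgen ν x m) := by
    intro x hx k hk m hm
    induction m, hm using Nat.le_induction with
    | base =>
      intro hm2
      have h2r := hrec x (k+2) (by omega) hm2
      have h1r := hrec x (k+1) (by omega) (by omega)
      rw [show k+2-1 = k+1 from rfl] at h2r
      rw [show k+1-1 = k from rfl] at h1r
      rw [h2r, h1r]
      refine (commute_iff_eq _ _).mpr ?_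
      exact braid_conj (ν k) (ν (k+1)) (ν (k+2)) (sgen ν x k)
        (hbraid k (k+1) (by omega) (by omega) (by omega) (by omega) (Or.inl rfl))
        (hbraid (k+1) (k+2) (by omega) (by omega) (by omega) (by omega) (Or.inl rfl))
        (hfar k (k+2) (by omega) (by omega) (by omega) (by omega) (Or.inl (by omega)))
        ((cHigh x hx k (k+2) hk (by omega) (by omega)).eq)
    | succ m hm ih =>
      intro hm2
      have hr := hrec x (m+1) (by omega) hm2
      rw [hr, show m+1-1 = m from rfl]
      have c1 : Commute (ν k) (ν m) :=
        (commute_iff_eq _ _).mpr (hfar k m (by omega) (by omega) (by omega) (by omega) (Or.inl (by omega)))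
      have c2 : Commute (ν k) (ν (m+1)) :=
        (commute_iff_eq _ _).mpr (hfar k (m+1) (by omega) (by omega) (by omega) (by omega) (Or.inl (by omega)))
      have c3 : Commute (ν k) (sgen ν x m) := ih (by omega)
      exact (((c1.mul_right c2).mul_right c3).mul_right c2).mul_right c1
  -- the s-generators are involutions
  have sInv : ∀ m, 1 ≤ m → m ≤ n - 1 → sgen ν s1 m * sgen ν s1 m = 1 := by
    intro m hm
    induction m, hm using Nat.le_induction with
    | base => intro _; rw [sgen_one]; exact hs2
    | succ m hm ih =>
      intro hm2
      rw [hrec s1 (m+1) (by omega) hm2, show m+1-1 = m from rfl]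
      have cS : ∀ y : G, sgen ν s1 m * (sgen ν s1 m * y) = y := fun y => by
        rw [← mul_assoc, ih (by omega), one_mul]
      simp only [mul_assoc]
      rw [hb2 m (by omega) (by omega), hb2 (m+1) (by omega) (by omega), cS,
        hb2 (m+1) (by omega) (by omega)]
      exact hν2 m (by omega) (by omega)
  -- main relation for (i, i+1)
  have R : ∀ i, 1 ≤ i → i + 1 ≤ n - 1 →
      sgen ν s1 (i+1) * sgen ν s1 i * sgen ν t1 (i+1)
        = sgen ν t1 i * sgen ν s1 (i+1) * sgen ν s1 i := by
    intro i hi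
    induction i, hi using Nat.le_induction with
    | base =>
      intro h2
      rw [show (1:ℕ)+1 = 2 from rfl]
      have hS2 := hrec s1 2 (by omega) (by omega)
      have hT2 := hrec t1 2 (by omega) (by omega)
      rw [show (2:ℕ)-1 = 1 from rfl] at hS2 hT2
      rw [hS2, hT2, sgen_one, sgen_one]
      exact hr41.symm
    | succ i hi ih =>
      intro h2
      rw [show i+1+1 = i+2 from rfl]
      have h2' : i + 2 ≤ n - 1 := by omega
      have ih' : sgen ν s1 (i+1) * (sgen ν s1 i * sgen ν t1 (i+1))
          = sgen ν t1 i * (sgen ν s1 (i+1) * sgen ν s1 i) := by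
        simpa only [mul_assoc] using ih (by omega)
      have W12 : ∀ x : G, (∀ ii, 3 ≤ ii → ii ≤ n - 1 → x * ν ii = ν ii * x) →
          (∀ y : G, sgen ν x (i+1) * (ν i * (ν (i+1) * (ν (i+2) * y)))
              = ν i * (ν (i+1) * (ν (i+2) * (sgen ν x i * y)))) ∧
          (∀ y : G, sgen ν x (i+2) * (ν i * (ν (i+1) * (ν (i+2) * y)))
              = ν i * (ν (i+1) * (ν (i+2) * (sgen ν x (i+1) * y)))) := by
        intro x hx
        have recX1 : sgen ν x (i+1) = ν i * ν (i+1) * sgen ν x i * ν (i+1) * ν i := by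
          have h := hrec x (i+1) (by omega) (by omega)
          rwa [show i+1-1 = i from rfl] at h
        have recX2 : sgen ν x (i+2)
            = ν (i+1) * ν (i+2) * sgen ν x (i+1) * ν (i+2) * ν (i+1) := by
          have h := hrec x (i+2) (by omega) (by omega)
          rwa [show i+2-1 = i+1 from rfl] at h
        have cX : Commute (ν (i+2)) (sgen ν x i) := cHigh x hx i (i+2) hi (by omega) h2'
        have lX : Commute (ν i) (sgen ν x (i+2)) := cLow x hx i hi (i+2) (by omega) h2'
        have mcX : ∀ y : G, sgen ν x i * (ν (i+2) * y) = ν (i+2) * (sgen ν x i * y) :=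
          fun y => by rw [← mul_assoc, ← cX.eq, mul_assoc]
        have mlX : ∀ y : G, sgen ν x (i+2) * (ν i * y) = ν i * (sgen ν x (i+2) * y) :=
          fun y => by rw [← mul_assoc, ← lX.eq, mul_assoc]
        constructor
        · intro y
          rw [recX1]
          simp only [mul_assoc]
          rw [hb2 i (by omega) (by omega), hb2 (i+1) (by omega) (by omega), mcX]
        · intro y
          rw [mlX]
          have inner : sgen ν x (i+2) * (ν (i+1) * (ν (i+2) * y))
              = ν (i+1) * (ν (i+2) * (sgen ν x (i+1) * y)) := by
            rw [recX2]
            simp only [mul_assoc]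
            rw [hb2 (i+1) (by omega) (by omega), hb2 (i+2) (by omega) (by omega)]
          rw [inner]
      obtain ⟨w1, w2⟩ := W12 s1 hsν
      obtain ⟨w3, w4⟩ := W12 t1 htν
      have w4e : sgen ν t1 (i+2) * (ν i * (ν (i+1) * ν (i+2)))
          = ν i * (ν (i+1) * (ν (i+2) * sgen ν t1 (i+1))) := by simpa using w4 1
      have w1e : sgen ν s1 (i+1) * (ν i * (ν (i+1) * ν (i+2)))
          = ν i * (ν (i+1) * (ν (i+2) * sgen ν s1 i)) := by simpa using w1 1
      have KEY : sgen ν s1 (i+2) * (sgen ν s1 (i+1) * (sgen ν t1 (i+2) * (ν i * (ν (i+1) * ν (i+2)))))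
          = sgen ν t1 (i+1) * (sgen ν s1 (i+2) * (sgen ν s1 (i+1) * (ν i * (ν (i+1) * ν (i+2))))) := by
        rw [w4e, w1 (sgen ν t1 (i+1)), w2 (sgen ν s1 i * sgen ν t1 (i+1)), ih',
          w1e, w2 (sgen ν s1 i), w3 (sgen ν s1 (i+1) * sgen ν s1 i)]
      simp only [← mul_assoc] at KEY
      exact mul_right_cancel (mul_right_cancel (mul_right_cancel KEY))
  -- conclude
  intro i j hi1 hi2 hj1 hj2 hij
  show sgen ν s1 j * sgen ν s1 i * sgen ν t1 j = sgen ν t1 i * sgen ν s1 j * sgen ν s1 i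
  rcases hij with rfl | rfl
  · exact R i hi1 hj2
  · have hRj := R j hj1 hi2
    have hRj' : sgen ν s1 (j+1) * (sgen ν s1 j * sgen ν t1 (j+1))
        = sgen ν t1 j * (sgen ν s1 (j+1) * sgen ν s1 j) := by
      simpa only [mul_assoc] using hRj
    have sj : ∀ y : G, sgen ν s1 j * (sgen ν s1 j * y) = y := fun y => by
      rw [← mul_assoc, sInv j hj1 hj2, one_mul]
    have sj1 : ∀ y : G, sgen ν s1 (j+1) * (sgen ν s1 (j+1) * y) = y := fun y => by
      rw [← mul_assoc, sInv (j+1) (by omega) hi2, one_mul]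
    have KEY2 : (sgen ν s1 j * (sgen ν s1 (j+1) * sgen ν t1 j)) * (sgen ν s1 (j+1) * sgen ν s1 j)
        = (sgen ν t1 (j+1) * (sgen ν s1 j * sgen ν s1 (j+1))) * (sgen ν s1 (j+1) * sgen ν s1 j) := by
      simp only [mul_assoc]
      rw [← hRj', sj1 (sgen ν s1 j * sgen ν t1 (j+1)), sj (sgen ν t1 (j+1)),
        sj1 (sgen ν s1 j), sInv j hj1 hj2, mul_one]
    have key := mul_right_cancel KEY2
    simp only [← mul_assoc] at key
    exact key
end

section
/- (Theorem 6.1: reduced presentation of the virtual singular twin group.) Let n ≥ 4. Let G_red be the presented group with generators S, T, V₁, …, V_{n−1} and relations: V_i² = 1 for all i and S² = 1; V_i V_j V_i = V_j V_i V_j for |i−j| = 1; V_i V_j = V_j V_i for |i−j| ≥ 2; S T = T S; T V_i = V_i T and S V_i = V_i S for i ≥ 3; T (V₁V₂ S V₂V₁) S = (V₁V₂ S V₂V₁) S (V₁V₂ T V₂V₁); S (V₂V₃V₁V₂ S V₂V₁V₃V₂) = (V₂V₃V₁V₂ S V₂V₁V₃V₂) S; T (V₂V₃V₁V₂ S V₂V₁V₃V₂)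 = (V₂V₃V₁V₂ S V₂V₁V₃V₂) T; T (V₂V₃V₁V₂ T V₂V₁V₃V₂) = (V₂V₃V₁V₂ T V₂V₁V₃V₂) T. Then there is a group isomorphism Φ : G_red ≅ VST_n with Φ(S) = s₁, Φ(T) = τ₁, and Φ(V_i) = ν_i for all 1 ≤ i ≤ n−1. -/
/-! ## The virtual singular twin group `VST_n` -/

abbrev VSTGen (n : ℕ) := Fin (n - 1) ⊕ Fin (n - 1) ⊕ Fin (n - 1)

def vstS (n : ℕ) (i : Fin (n - 1)) : FreeGroup (VSTGen n) := FreeGroup.of (Sum.inl i)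
def vstT (n : ℕ) (i : Fin (n - 1)) : FreeGroup (VSTGen n) := FreeGroup.of (Sum.inr (Sum.inl i))
def vstN (n : ℕ) (i : Fin (n - 1)) : FreeGroup (VSTGen n) := FreeGroup.of (Sum.inr (Sum.inr i))

def vstAdj {n : ℕ} (i j : Fin (n - 1)) : Prop := i.val + 1 = j.val ∨ j.val + 1 = i.val
def vstFar {n : ℕ} (i j : Fin (n - 1)) : Prop := i.val + 2 ≤ j.val ∨ j.val + 2 ≤ i.val

/-- The defining relations of the virtual singular twin group `VST_n`. -/
def vstRels (n : ℕ) : Set (FreeGroup (VSTGen n)) :=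
  {r | (∃ i, r = vstS n i * vstS n i) ∨
       (∃ i, r = vstN n i * vstN n i) ∨
       (∃ i, r = vstT n i * vstS n i * (vstS n i * vstT n i)⁻¹) ∨
       (∃ i j, vstAdj i j ∧
          r = vstS n i * vstS n j * vstT n i * (vstT n j * vstS n i * vstS n j)⁻¹) ∨
       (∃ i j, vstAdj i j ∧
          r = vstN n i * vstN n j * vstN n i * (vstN n j * vstN n i * vstN n j)⁻¹) ∨
       (∃ i j, vstAdj i j ∧
          r = vstN n i * vstS n j * vstN n i * (vstN n j * vstS n i * vstN n j)⁻¹) ∨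
       (∃ i j, vstAdj i j ∧
          r = vstN n i * vstT n j * vstN n i * (vstN n j * vstT n i * vstN n j)⁻¹) ∨
       (∃ i j, vstFar i j ∧
          ∃ g ∈ ({vstS n, vstT n, vstN n} : Set (Fin (n - 1) → FreeGroup (VSTGen n))),
          ∃ h ∈ ({vstS n, vstT n, vstN n} : Set (Fin (n - 1) → FreeGroup (VSTGen n))),
            r = g i * h j * (h j * g i)⁻¹)}

/-- The virtual singular twin group `VST_n`. -/
abbrev VST (n : ℕ) := PresentedGroup (vstRels n)

/-! ## The reduced presentation -/

/-- Generators `S`, `T`, `V₁, …, V_{n-1}` of the reduced presentation. -/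
abbrev RedGen (n : ℕ) := Unit ⊕ Unit ⊕ Fin (n - 1)

def redS (n : ℕ) : FreeGroup (RedGen n) := FreeGroup.of (Sum.inl ())
def redT (n : ℕ) : FreeGroup (RedGen n) := FreeGroup.of (Sum.inr (Sum.inl ()))
def redV (n : ℕ) (i : Fin (n - 1)) : FreeGroup (RedGen n) := FreeGroup.of (Sum.inr (Sum.inr i))

/-- The relations of the reduced presentation (Theorem 6.1). -/
def redRels (n : ℕ) : Set (FreeGroup (RedGen n)) :=
  {r | (∃ i, r = redV n i * redV n i) ∨
       r = redS n * redS n ∨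
       (∃ i j, vstAdj i j ∧
          r = redV n i * redV n j * redV n i * (redV n j * redV n i * redV n j)⁻¹) ∨
       (∃ i j, vstFar i j ∧ r = redV n i * redV n j * (redV n j * redV n i)⁻¹) ∨
       r = redS n * redT n * (redT n * redS n)⁻¹ ∨
       (∃ i : Fin (n - 1), 2 ≤ i.val ∧ r = redT n * redV n i * (redV n i * redT n)⁻¹) ∨
       (∃ i : Fin (n - 1), 2 ≤ i.val ∧ r = redS n * redV n i * (redV n i * redS n)⁻¹) ∨
       (∃ i j k : Fin (n - 1), i.val = 0 ∧ j.val = 1 ∧ k.val = 2 ∧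
         (r = redT n * (redV n i * redV n j * redS n * redV n j * redV n i) * redS n *
               ((redV n i * redV n j * redS n * redV n j * redV n i) * redS n *
                (redV n i * redV n j * redT n * redV n j * redV n i))⁻¹ ∨
          r = redS n * (redV n j * redV n k * redV n i * redV n j * redS n *
                        redV n j * redV n i * redV n k * redV n j) *
               ((redV n j * redV n k * redV n i * redV n j * redS n *
                 redV n j * redV n i * redV n k * redV n j) * redS n)⁻¹ ∨
          r = redT n * (redV n j * redV n k * redV n i * redV n j * redS n *
                        redV n j * redV n i * redV n k * redV n j) *
               ((redV n j * redV n k * redV n i * redV n j * redS n *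
                 redV n j * redV n i * redV n k * redV n j) * redT n)⁻¹ ∨
          r = redT n * (redV n j * redV n k * redV n i * redV n j * redT n *
                        redV n j * redV n i * redV n k * redV n j) *
               ((redV n j * redV n k * redV n i * redV n j * redT n *
                 redV n j * redV n i * redV n k * redV n j) * redT n)⁻¹))}

namespace Thm61
open PresentedGroup

lemma mk_rel_one {α : Type*} {rels : Set (FreeGroup α)} {r : FreeGroup α} (h : r ∈ rels) :
    PresentedGroup.mk rels r = 1 :=
  (QuotientGroup.eq_one_iff r).mpr (Subgroup.subset_normalClosure h)

/-- ℕ-indexed generators in the reduced group, junk value 1 out of range. -/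
def Vr (n : ℕ) (k : ℕ) : PresentedGroup (redRels n) :=
  if h : k < n - 1 then PresentedGroup.of (Sum.inr (Sum.inr ⟨k, h⟩)) else 1

def Sr (n : ℕ) : PresentedGroup (redRels n) := PresentedGroup.of (Sum.inl ())
def Tr (n : ℕ) : PresentedGroup (redRels n) := PresentedGroup.of (Sum.inr (Sum.inl ()))

lemma Vr_of {n : ℕ} (i : Fin (n-1)) : Vr n i.val = PresentedGroup.of (Sum.inr (Sum.inr i)) := by
  simp [Vr, i.isLt]

variable {n : ℕ}

lemma mk_redV (i : Fin (n-1)) : PresentedGroup.mk (redRels n) (redV n i) = Vr n i.val := by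
  rw [Vr_of]; rfl

lemma mk_redS : PresentedGroup.mk (redRels n) (redS n) = Sr n := rfl
lemma mk_redT : PresentedGroup.mk (redRels n) (redT n) = Tr n := rfl

lemma Vr_sq (k : ℕ) : Vr n k * Vr n k = 1 := by
  by_cases h : k < n - 1
  · have := mk_rel_one (rels := redRels n) (Or.inl ⟨⟨k, h⟩, rfl⟩)
    rw [map_mul, mk_redV] at this
    simpa using this
  · simp [Vr, h]

lemma Sr_sq : Sr n * Sr n = 1 := by
  have := mk_rel_one (rels := redRels n) (Or.inr (Or.inl rfl))
  rw [map_mul, mk_redS] at this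
  exact this

lemma Vr_inv (k : ℕ) : (Vr n k)⁻¹ = Vr n k :=
  inv_eq_of_mul_eq_one_right (Vr_sq k)

lemma Sr_inv : (Sr n)⁻¹ = Sr n := inv_eq_of_mul_eq_one_right Sr_sq


lemma Vr_braid {k : ℕ} (h : k + 1 < n - 1) :
    Vr n k * Vr n (k+1) * Vr n k = Vr n (k+1) * Vr n k * Vr n (k+1) := by
  have hk : k < n - 1 := by omega
  have := mk_rel_one (rels := redRels n)
    (Or.inr (Or.inr (Or.inl ⟨⟨k, hk⟩, ⟨k+1, h⟩, Or.inl rfl, rfl⟩)))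
  simp only [map_mul, map_inv, mk_redV] at this
  rw [mul_inv_eq_one] at this
  exact this

lemma Vr_far {k l : ℕ} (h : k + 2 ≤ l) : Vr n k * Vr n l = Vr n l * Vr n k := by
  by_cases hl : l < n - 1
  · have hk : k < n - 1 := by omega
    have := mk_rel_one (rels := redRels n)
      (Or.inr (Or.inr (Or.inr (Or.inl ⟨⟨k, hk⟩, ⟨l, hl⟩, Or.inl h, rfl⟩))))
    simp only [map_mul, map_inv, mk_redV] at this
    rw [mul_inv_eq_one] at this
    exact this
  · simp [Vr, hl, show ¬ (l < n -1) from hl]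

lemma ST_comm : Sr n * Tr n = Tr n * Sr n := by
  have := mk_rel_one (rels := redRels n)
    (Or.inr (Or.inr (Or.inr (Or.inr (Or.inl rfl)))))
  simp only [map_mul, map_inv, mk_redS, mk_redT] at this
  rw [mul_inv_eq_one] at this
  exact this

lemma TV_comm {k : ℕ} (h : 2 ≤ k) : Tr n * Vr n k = Vr n k * Tr n := by
  by_cases hk : k < n - 1
  · have := mk_rel_one (rels := redRels n)
      (Or.inr (Or.inr (Or.inr (Or.inr (Or.inr (Or.inl ⟨⟨k, hk⟩, h, rfl⟩))))))
    simp only [map_mul, map_inv, mk_redS, mk_redT, mk_redV] at this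
    rw [mul_inv_eq_one] at this
    exact this
  · simp [Vr, hk]

lemma SV_comm {k : ℕ} (h : 2 ≤ k) : Sr n * Vr n k = Vr n k * Sr n := by
  by_cases hk : k < n - 1
  · have := mk_rel_one (rels := redRels n)
      (Or.inr (Or.inr (Or.inr (Or.inr (Or.inr (Or.inr (Or.inl ⟨⟨k, hk⟩, h, rfl⟩)))))))
    simp only [map_mul, map_inv, mk_redS, mk_redT, mk_redV] at this
    rw [mul_inv_eq_one] at this
    exact this
  · simp [Vr, hk]


/-- Word `w_i` conjugating `S` to `s_i`. -/
def Wr (n : ℕ) : ℕ → PresentedGroup (redRels n)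
  | 0 => 1
  | (i+1) => Vr n i * Vr n (i+1) * Wr n i

/-- `s_i` in the reduced group. -/
def Sri (n : ℕ) (i : ℕ) : PresentedGroup (redRels n) := Wr n i * Sr n * (Wr n i)⁻¹
/-- `τ_i` in the reduced group. -/
def Tri (n : ℕ) (i : ℕ) : PresentedGroup (redRels n) := Wr n i * Tr n * (Wr n i)⁻¹

lemma R1 (hn : 4 ≤ n) : Tr n * Sri n 1 * Sr n = Sri n 1 * Sr n * Tri n 1 := by
  have h0 : (0:ℕ) < n-1 := by omega
  have h1 : (1:ℕ) < n-1 := by omega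
  have h2 : (2:ℕ) < n-1 := by omega
  have := mk_rel_one (rels := redRels n)
    (Or.inr (Or.inr (Or.inr (Or.inr (Or.inr (Or.inr (Or.inr
      ⟨⟨0,h0⟩, ⟨1,h1⟩, ⟨2,h2⟩, rfl, rfl, rfl, Or.inl rfl⟩)))))))
  simp only [map_mul, map_inv, mk_redS, mk_redT, mk_redV] at this
  rw [mul_inv_eq_one] at this
  simp only [Sri, Tri, Wr, mul_inv_rev, Vr_inv, inv_one, one_mul, mul_one, mul_assoc] at this ⊢
  exact this

lemma R2 (hn : 4 ≤ n) : Sr n * Sri n 2 = Sri n 2 * Sr n := by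
  have h0 : (0:ℕ) < n-1 := by omega
  have h1 : (1:ℕ) < n-1 := by omega
  have h2 : (2:ℕ) < n-1 := by omega
  have := mk_rel_one (rels := redRels n)
    (Or.inr (Or.inr (Or.inr (Or.inr (Or.inr (Or.inr (Or.inr
      ⟨⟨0,h0⟩, ⟨1,h1⟩, ⟨2,h2⟩, rfl, rfl, rfl, Or.inr (Or.inl rfl)⟩)))))))
  simp only [map_mul, map_inv, mk_redS, mk_redT, mk_redV] at this
  rw [mul_inv_eq_one] at this
  simp only [Sri, Tri, Wr, mul_inv_rev, Vr_inv, inv_one, one_mul, mul_one, mul_assoc] at this ⊢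
  exact this

lemma R3 (hn : 4 ≤ n) : Tr n * Sri n 2 = Sri n 2 * Tr n := by
  have h0 : (0:ℕ) < n-1 := by omega
  have h1 : (1:ℕ) < n-1 := by omega
  have h2 : (2:ℕ) < n-1 := by omega
  have := mk_rel_one (rels := redRels n)
    (Or.inr (Or.inr (Or.inr (Or.inr (Or.inr (Or.inr (Or.inr
      ⟨⟨0,h0⟩, ⟨1,h1⟩, ⟨2,h2⟩, rfl, rfl, rfl, Or.inr (Or.inr (Or.inl rfl))⟩)))))))
  simp only [map_mul, map_inv, mk_redS, mk_redT, mk_redV] at this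
  rw [mul_inv_eq_one] at this
  simp only [Sri, Tri, Wr, mul_inv_rev, Vr_inv, inv_one, one_mul, mul_one, mul_assoc] at this ⊢
  exact this

lemma R4 (hn : 4 ≤ n) : Tr n * Tri n 2 = Tri n 2 * Tr n := by
  have h0 : (0:ℕ) < n-1 := by omega
  have h1 : (1:ℕ) < n-1 := by omega
  have h2 : (2:ℕ) < n-1 := by omega
  have := mk_rel_one (rels := redRels n)
    (Or.inr (Or.inr (Or.inr (Or.inr (Or.inr (Or.inr (Or.inr
      ⟨⟨0,h0⟩, ⟨1,h1⟩, ⟨2,h2⟩, rfl, rfl, rfl, Or.inr (Or.inr (Or.inr rfl))⟩)))))))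
  simp only [map_mul, map_inv, mk_redS, mk_redT, mk_redV] at this
  rw [mul_inv_eq_one] at this
  simp only [Sri, Tri, Wr, mul_inv_rev, Vr_inv, inv_one, one_mul, mul_one, mul_assoc] at this ⊢
  exact this

/-- (B): `V_l` commutes with `w_i` for `l ≥ i+2`. -/
lemma V_W_far {l i : ℕ} (h : i + 2 ≤ l) : Vr n l * Wr n i = Wr n i * Vr n l := by
  induction i with
  | zero => simp [Wr]
  | succ i ih =>
      have h1 : Vr n l * Vr n i = Vr n i * Vr n l := (Vr_far (by omega)).symm
      have h2 : Vr n l * Vr n (i+1) = Vr n (i+1) * Vr n l := (Vr_far (by omega)).symm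
      have h3 := ih (by omega)
      calc Vr n l * (Vr n i * Vr n (i+1) * Wr n i)
          = Vr n i * (Vr n l * Vr n (i+1)) * Wr n i := by
              rw [← mul_assoc, ← mul_assoc, h1]; group
        _ = Vr n i * Vr n (i+1) * (Vr n l * Wr n i) := by rw [h2]; group
        _ = Vr n i * Vr n (i+1) * Wr n i * Vr n l := by rw [h3]; group

/-- (A): `V_k w_i = w_i V_{k+2}` for `k+2 ≤ i < n-1`. -/
lemma V_W_shift {k i : ℕ} (h : k + 2 ≤ i) (hi : i < n - 1) :
    Vr n k * Wr n i = Wr n i * Vr n (k+2) := by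
  induction i, h using Nat.le_induction with
  | base =>
      -- V_k w_{k+2} = w_{k+2} V_{k+2}; w_{k+2} = V_{k+1} V_{k+2} V_k V_{k+1} w_k
      have hb1 : Vr n k * Vr n (k+1) * Vr n k = Vr n (k+1) * Vr n k * Vr n (k+1) :=
        Vr_braid (by omega)
      have hb2 : Vr n (k+1) * Vr n (k+2) * Vr n (k+1) = Vr n (k+2) * Vr n (k+1) * Vr n (k+2) :=
        Vr_braid (by omega)
      have hf : Vr n k * Vr n (k+2) = Vr n (k+2) * Vr n k := Vr_far (by omega)
      have hw : Vr n (k+2) * Wr n k = Wr n k * Vr n (k+2) := V_W_far (by omega)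
      show Vr n k * (Vr n (k+1) * Vr n (k+2) * Wr n (k+1)) = _
      show Vr n k * (Vr n (k+1) * Vr n (k+2) * (Vr n k * Vr n (k+1) * Wr n k))
          = Vr n (k+1) * Vr n (k+2) * (Vr n k * Vr n (k+1) * Wr n k) * Vr n (k+2)
      have key : Vr n k * (Vr n (k+1) * Vr n (k+2) * (Vr n k * Vr n (k+1)))
          = Vr n (k+1) * Vr n (k+2) * (Vr n k * Vr n (k+1)) * Vr n (k+2) := by
        calc Vr n k * (Vr n (k+1) * Vr n (k+2) * (Vr n k * Vr n (k+1)))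
            = Vr n k * Vr n (k+1) * (Vr n (k+2) * Vr n k) * Vr n (k+1) := by group
          _ = Vr n k * Vr n (k+1) * Vr n k * (Vr n (k+2) * Vr n (k+1)) := by rw [← hf]; group
          _ = Vr n (k+1) * Vr n k * (Vr n (k+1) * Vr n (k+2) * Vr n (k+1)) := by
                rw [hb1]; group
          _ = Vr n (k+1) * Vr n k * (Vr n (k+2) * Vr n (k+1) * Vr n (k+2)) := by rw [hb2]
          _ = Vr n (k+1) * (Vr n k * Vr n (k+2)) * Vr n (k+1) * Vr n (k+2) := by group
          _ = Vr n (k+1) * Vr n (k+2) * (Vr n k * Vr n (k+1)) * Vr n (k+2) := by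
                rw [hf]; group
      calc Vr n k * (Vr n (k+1) * Vr n (k+2) * (Vr n k * Vr n (k+1) * Wr n k))
          = Vr n k * (Vr n (k+1) * Vr n (k+2) * (Vr n k * Vr n (k+1))) * Wr n k := by group
        _ = Vr n (k+1) * Vr n (k+2) * (Vr n k * Vr n (k+1)) * (Vr n (k+2) * Wr n k) := by
              rw [key]; group
        _ = Vr n (k+1) * Vr n (k+2) * (Vr n k * Vr n (k+1) * Wr n k) * Vr n (k+2) := by
              rw [hw]; group
  | succ i hki ih =>
      have h1 : Vr n k * Vr n i = Vr n i * Vr n k := Vr_far (by omega)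
      have h2 : Vr n k * Vr n (i+1) = Vr n (i+1) * Vr n k := Vr_far (by omega)
      have h3 := ih (by omega)
      show Vr n k * (Vr n i * Vr n (i+1) * Wr n i) = Vr n i * Vr n (i+1) * Wr n i * Vr n (k+2)
      calc Vr n k * (Vr n i * Vr n (i+1) * Wr n i)
          = Vr n i * (Vr n k * Vr n (i+1)) * Wr n i := by
              rw [← mul_assoc, ← mul_assoc, h1]; group
        _ = Vr n i * Vr n (i+1) * (Vr n k * Wr n i) := by rw [h2]; group
        _ = Vr n i * Vr n (i+1) * Wr n i * Vr n (k+2) := by rw [h3]; group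

section Generic
variable {X Y : PresentedGroup (redRels n)}

/-- generic `X_i := w_i X w_i⁻¹`. -/
def cnj (n : ℕ) (X : PresentedGroup (redRels n)) (i : ℕ) : PresentedGroup (redRels n) :=
  Wr n i * X * (Wr n i)⁻¹

lemma cnj_zero : cnj n X 0 = X := by simp [cnj, Wr]

lemma cnj_succ (i : ℕ) :
    cnj n X (i+1) = Vr n i * Vr n (i+1) * cnj n X i * Vr n (i+1) * Vr n i := by
  simp only [cnj]
  show Vr n i * Vr n (i+1) * Wr n i * X * (Vr n i * Vr n (i+1) * Wr n i)⁻¹ = _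
  rw [mul_inv_rev, mul_inv_rev, Vr_inv, Vr_inv]
  group

/-- conjugation of a product. -/
lemma conj_mul {G : Type*} [Group G] (w A B : G) :
    (w * A * w⁻¹) * (w * B * w⁻¹) = w * (A * B) * w⁻¹ := by group

/-- (D): far commutation of `V_k` with `X_i`. -/
lemma V_cnj_far (hX : ∀ l, 2 ≤ l → X * Vr n l = Vr n l * X) {k i : ℕ}
    (h : k + 2 ≤ i ∨ i + 2 ≤ k) (hi : i < n - 1) :
    Vr n k * cnj n X i = cnj n X i * Vr n k := by
  obtain ⟨l, hl2, h1⟩ : ∃ l, 2 ≤ l ∧ Vr n k * Wr n i = Wr n i * Vr n l := by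
    rcases h with h | h
    · exact ⟨k + 2, by omega, V_W_shift h hi⟩
    · exact ⟨k, by omega, V_W_far h⟩
  have e : Wr n i * Vr n l * (Wr n i)⁻¹ = Vr n k := by rw [← h1]; group
  simp only [cnj]
  rw [← e, conj_mul, conj_mul, ← hX l hl2]

/-- (F): conjugation by `g_i = V_i V_{i+1} V_{i+2}` shifts index by one. -/
lemma g_conj (hX : ∀ l, 2 ≤ l → X * Vr n l = Vr n l * X) {i : ℕ} (hi : i + 2 < n - 1) :
    Vr n i * Vr n (i+1) * Vr n (i+2) * cnj n X i * Vr n (i+2) * Vr n (i+1) * Vr n i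
      = cnj n X (i+1) := by
  have h1 : Vr n (i+2) * cnj n X i = cnj n X i * Vr n (i+2) :=
    V_cnj_far hX (Or.inr (by omega)) (by omega)
  rw [cnj_succ]
  calc Vr n i * Vr n (i+1) * Vr n (i+2) * cnj n X i * Vr n (i+2) * Vr n (i+1) * Vr n i
      = Vr n i * Vr n (i+1) * (Vr n (i+2) * cnj n X i) * Vr n (i+2) * Vr n (i+1) * Vr n i := by
        group
    _ = Vr n i * Vr n (i+1) * cnj n X i * (Vr n (i+2) * Vr n (i+2)) * Vr n (i+1) * Vr n i := by
        rw [h1]; group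
    _ = Vr n i * Vr n (i+1) * cnj n X i * Vr n (i+1) * Vr n i := by rw [Vr_sq]; group

lemma g_conj' (hX : ∀ l, 2 ≤ l → X * Vr n l = Vr n l * X) {i : ℕ} (hi : i + 2 < n - 1) :
    Vr n i * Vr n (i+1) * Vr n (i+2) * cnj n X (i+1) * Vr n (i+2) * Vr n (i+1) * Vr n i
      = cnj n X (i+2) := by
  have h1 : Vr n i * cnj n X (i+2) = cnj n X (i+2) * Vr n i :=
    V_cnj_far hX (Or.inl (by omega)) hi
  have h2 : cnj n X (i+2)
      = Vr n (i+1) * Vr n (i+2) * cnj n X (i+1) * Vr n (i+2) * Vr n (i+1) := cnj_succ (i+1)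
  calc Vr n i * Vr n (i+1) * Vr n (i+2) * cnj n X (i+1) * Vr n (i+2) * Vr n (i+1) * Vr n i
      = Vr n i * cnj n X (i+2) * Vr n i := by rw [h2]; group
    _ = cnj n X (i+2) * (Vr n i * Vr n i) := by rw [h1]; group
    _ = cnj n X (i+2) := by rw [Vr_sq]; group

end Generic

lemma cnj_sq (hX : X * X = 1) (i : ℕ) : cnj n X i * cnj n X i = 1 := by
  simp only [cnj]
  rw [conj_mul, hX]
  group

lemma mb_flip {G : Type*} [Group G] (a b x y : G) (ha : a * a = 1) (hb : b * b = 1)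
    (R : x * b * a = b * a * y) : a * b * x = y * a * b := by
  have hy : y = a * b * x * b * a := by
    have h1 : a⁻¹ * (b⁻¹ * (x * b * a)) = y := by rw [R]; group
    rw [← h1, inv_eq_of_mul_eq_one_right ha, inv_eq_of_mul_eq_one_right hb]; group
  rw [hy]
  refine (calc a * b * x * b * a * a * b = a * b * x * b * (a * a) * b := by group
    _ = a * b * x * (b * b) := by rw [ha]; group
    _ = a * b * x := by rw [hb]; group).symm

lemma hS_comm : ∀ l, 2 ≤ l → Sr n * Vr n l = Vr n l * Sr n := fun _ h => SV_comm h
lemma hT_comm : ∀ l, 2 ≤ l → Tr n * Vr n l = Vr n l * Tr n := fun _ h => TV_comm h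

lemma Sri_eq (i : ℕ) : Sri n i = cnj n (Sr n) i := rfl
lemma Tri_eq (i : ℕ) : Tri n i = cnj n (Tr n) i := rfl

/-- mixed braid relation, first form. -/
lemma MB (hn : 4 ≤ n) : ∀ i : ℕ, i + 1 < n - 1 →
    cnj n (Tr n) i * cnj n (Sr n) (i+1) * cnj n (Sr n) i
      = cnj n (Sr n) (i+1) * cnj n (Sr n) i * cnj n (Tr n) (i+1) := by
  intro i
  induction i with
  | zero =>
      intro _
      have := R1 hn
      rw [Sri_eq, Tri_eq] at this
      simpa [cnj_zero] using this
  | succ i ih =>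
      intro hi
      have hii : i + 2 < n - 1 := by omega
      have ih' := ih (by omega)
      set φ := MulAut.conj (Vr n i * Vr n (i+1) * Vr n (i+2)) with hφ
      have e1 : φ (cnj n (Tr n) i) = cnj n (Tr n) (i+1) := by
        show Vr n i * Vr n (i+1) * Vr n (i+2) * cnj n (Tr n) i
            * (Vr n i * Vr n (i+1) * Vr n (i+2))⁻¹ = _
        rw [mul_inv_rev, mul_inv_rev, Vr_inv, Vr_inv, Vr_inv, ← g_conj hT_comm hii]
        group
      have e2 : φ (cnj n (Sr n) (i+1)) = cnj n (Sr n) (i+2) := by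
        show Vr n i * Vr n (i+1) * Vr n (i+2) * cnj n (Sr n) (i+1)
            * (Vr n i * Vr n (i+1) * Vr n (i+2))⁻¹ = _
        rw [mul_inv_rev, mul_inv_rev, Vr_inv, Vr_inv, Vr_inv, ← g_conj' hS_comm hii]
        group
      have e3 : φ (cnj n (Sr n) i) = cnj n (Sr n) (i+1) := by
        show Vr n i * Vr n (i+1) * Vr n (i+2) * cnj n (Sr n) i
            * (Vr n i * Vr n (i+1) * Vr n (i+2))⁻¹ = _
        rw [mul_inv_rev, mul_inv_rev, Vr_inv, Vr_inv, Vr_inv, ← g_conj hS_comm hii]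
        group
      have e4 : φ (cnj n (Tr n) (i+1)) = cnj n (Tr n) (i+2) := by
        show Vr n i * Vr n (i+1) * Vr n (i+2) * cnj n (Tr n) (i+1)
            * (Vr n i * Vr n (i+1) * Vr n (i+2))⁻¹ = _
        rw [mul_inv_rev, mul_inv_rev, Vr_inv, Vr_inv, Vr_inv, ← g_conj' hT_comm hii]
        group
      calc cnj n (Tr n) (i+1) * cnj n (Sr n) (i+1+1) * cnj n (Sr n) (i+1)
          = φ (cnj n (Tr n) i * cnj n (Sr n) (i+1) * cnj n (Sr n) i) := by
            rw [map_mul, map_mul, e1, e2, e3]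
        _ = φ (cnj n (Sr n) (i+1) * cnj n (Sr n) i * cnj n (Tr n) (i+1)) := by rw [ih']
        _ = cnj n (Sr n) (i+1+1) * cnj n (Sr n) (i+1) * cnj n (Tr n) (i+1+1) := by
            rw [map_mul, map_mul, e2, e3, e4]

/-- mixed braid relation, second form. -/
lemma MB' (hn : 4 ≤ n) (i : ℕ) (hi : i + 1 < n - 1) :
    cnj n (Sr n) i * cnj n (Sr n) (i+1) * cnj n (Tr n) i
      = cnj n (Tr n) (i+1) * cnj n (Sr n) i * cnj n (Sr n) (i+1) :=
  mb_flip _ _ _ _ (cnj_sq Sr_sq i) (cnj_sq Sr_sq (i+1)) (MB hn i hi)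

lemma cnj_comm (h : X * Y = Y * X) (i : ℕ) :
    cnj n X i * cnj n Y i = cnj n Y i * cnj n X i := by
  simp only [cnj]
  rw [conj_mul, conj_mul, h]

lemma adj_conj (i : ℕ) :
    Vr n i * cnj n X (i+1) * Vr n i = Vr n (i+1) * cnj n X i * Vr n (i+1) := by
  rw [cnj_succ]
  calc Vr n i * (Vr n i * Vr n (i+1) * cnj n X i * Vr n (i+1) * Vr n i) * Vr n i
      = (Vr n i * Vr n i) * Vr n (i+1) * cnj n X i * Vr n (i+1) * (Vr n i * Vr n i) := by group
    _ = Vr n (i+1) * cnj n X i * Vr n (i+1) := by rw [Vr_sq]; group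

/-- generic far commutation. -/
lemma FC (hX : ∀ l, 2 ≤ l → X * Vr n l = Vr n l * X)
    (hY : ∀ l, 2 ≤ l → Y * Vr n l = Vr n l * Y)
    (seed : X * cnj n Y 2 = cnj n Y 2 * X) :
    ∀ i j : ℕ, i + 2 ≤ j → j < n - 1 → cnj n X i * cnj n Y j = cnj n Y j * cnj n X i := by
  intro i
  induction i with
  | zero =>
      intro j hj hjn
      rw [cnj_zero]
      induction j, hj using Nat.le_induction with
      | base => exact seed
      | succ j hj2 ihj =>
          have ihj' := ihj (by omega)
          have c1 : Commute X (Vr n j) := hX j (by omega)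
          have c2 : Commute X (Vr n (j+1)) := hX (j+1) (by omega)
          have c3 : Commute X (cnj n Y j) := ihj'
          rw [cnj_succ]
          exact ((((c1.mul_right c2).mul_right c3).mul_right c2).mul_right c1).eq
  | succ i ihi =>
      intro j hj hjn
      have hi1 : Commute (Vr n i) (cnj n Y j) := V_cnj_far hY (Or.inl (by omega)) hjn
      have hi2 : Commute (Vr n (i+1)) (cnj n Y j) := V_cnj_far hY (Or.inl (by omega)) hjn
      have hc : Commute (cnj n X i) (cnj n Y j) := ihi j (by omega) hjn
      rw [cnj_succ]
      exact ((((hi1.mul_left hi2).mul_left hc).mul_left hi2).mul_left hi1).eq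

lemma seedSS (hn : 4 ≤ n) : Sr n * cnj n (Sr n) 2 = cnj n (Sr n) 2 * Sr n := by
  have := R2 hn; rwa [Sri_eq] at this
lemma seedTS (hn : 4 ≤ n) : Tr n * cnj n (Sr n) 2 = cnj n (Sr n) 2 * Tr n := by
  have := R3 hn; rwa [Sri_eq] at this
lemma seedTT (hn : 4 ≤ n) : Tr n * cnj n (Tr n) 2 = cnj n (Tr n) 2 * Tr n := by
  have := R4 hn; rwa [Tri_eq] at this

lemma W2_sq (hn : 4 ≤ n) : Wr n 2 * Wr n 2 = 1 := by
  have h02 : Vr n 0 * Vr n 2 = Vr n 2 * Vr n 0 := Vr_far (by norm_num)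
  have h00 : Vr n 0 * Vr n 0 = 1 := Vr_sq 0
  have h11 : Vr n 1 * Vr n 1 = 1 := Vr_sq 1
  have h22 : Vr n 2 * Vr n 2 = 1 := Vr_sq 2
  have w2e : Wr n 2 = Vr n 1 * Vr n 2 * Vr n 0 * Vr n 1 := by
    show Vr n 1 * Vr n 2 * (Vr n 0 * Vr n 1 * 1) = _
    group
  rw [w2e]
  calc Vr n 1 * Vr n 2 * Vr n 0 * Vr n 1 * (Vr n 1 * Vr n 2 * Vr n 0 * Vr n 1)
      = Vr n 1 * Vr n 2 * Vr n 0 * (Vr n 1 * Vr n 1) * Vr n 2 * Vr n 0 * Vr n 1 := by group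
    _ = Vr n 1 * Vr n 2 * (Vr n 0 * Vr n 2) * Vr n 0 * Vr n 1 := by rw [h11]; group
    _ = Vr n 1 * Vr n 2 * (Vr n 2 * Vr n 0) * Vr n 0 * Vr n 1 := by rw [h02]
    _ = Vr n 1 * (Vr n 2 * Vr n 2) * (Vr n 0 * Vr n 0) * Vr n 1 := by group
    _ = Vr n 1 * Vr n 1 := by rw [h22, h00]; group
    _ = 1 := h11

lemma seedST (hn : 4 ≤ n) : Sr n * cnj n (Tr n) 2 = cnj n (Tr n) 2 * Sr n := by
  have husq := W2_sq hn
  have hWinv : (Wr n 2)⁻¹ = Wr n 2 := inv_eq_of_mul_eq_one_right husq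
  set φ := MulAut.conj (Wr n 2) with hφ
  have f1 : φ (Tr n) = cnj n (Tr n) 2 := by
    rw [hφ, MulAut.conj_apply]; rfl
  have f2 : φ (cnj n (Sr n) 2) = Sr n := by
    rw [hφ, MulAut.conj_apply]
    show Wr n 2 * (Wr n 2 * Sr n * (Wr n 2)⁻¹) * (Wr n 2)⁻¹ = Sr n
    rw [hWinv]
    calc Wr n 2 * (Wr n 2 * Sr n * Wr n 2) * Wr n 2
        = (Wr n 2 * Wr n 2) * Sr n * (Wr n 2 * Wr n 2) := by group
      _ = Sr n := by rw [husq]; group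
  have h3 := congrArg φ (seedTS hn)
  rw [map_mul, map_mul, f1, f2] at h3
  exact h3.symm

/-- all far commutations between `S_a, T_a, V_a` and `S_b, T_b, V_b`. -/
lemma big_far (hn : 4 ≤ n) {a b : ℕ} (hfar : a + 2 ≤ b ∨ b + 2 ≤ a)
    (ha : a < n - 1) (hb : b < n - 1)
    (P Q : ℕ → PresentedGroup (redRels n))
    (hP : P = cnj n (Sr n) ∨ P = cnj n (Tr n) ∨ P = Vr n)
    (hQ : Q = cnj n (Sr n) ∨ Q = cnj n (Tr n) ∨ Q = Vr n) :
    P a * Q b = Q b * P a := by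
  have key : ∀ (X Y : PresentedGroup (redRels n)),
      ((∀ l, 2 ≤ l → X * Vr n l = Vr n l * X) ∧
        (X = Sr n ∨ X = Tr n)) →
      ((∀ l, 2 ≤ l → Y * Vr n l = Vr n l * Y) ∧
        (Y = Sr n ∨ Y = Tr n)) →
      cnj n X a * cnj n Y b = cnj n Y b * cnj n X a := by
    intro X Y ⟨hX, hXe⟩ ⟨hY, hYe⟩
    have seed : ∀ (U V : PresentedGroup (redRels n)), (U = Sr n ∨ U = Tr n) →
        (V = Sr n ∨ V = Tr n) → U * cnj n V 2 = cnj n V 2 * U := by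
      rintro U V (rfl | rfl) (rfl | rfl)
      · exact seedSS hn
      · exact seedST hn
      · exact seedTS hn
      · exact seedTT hn
    rcases hfar with h | h
    · exact FC hX hY (seed X Y hXe hYe) a b h hb
    · exact (FC hY hX (seed Y X hYe hXe) b a h ha).symm
  have hScomm := @hS_comm n
  have hTcomm := @hT_comm n
  rcases hP with rfl | rfl | rfl <;> rcases hQ with rfl | rfl | rfl
  · exact key _ _ ⟨hScomm, Or.inl rfl⟩ ⟨hScomm, Or.inl rfl⟩
  · exact key _ _ ⟨hScomm, Or.inl rfl⟩ ⟨hTcomm, Or.inr rfl⟩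
  · exact (V_cnj_far hScomm (hfar.symm) ha).symm
  · exact key _ _ ⟨hTcomm, Or.inr rfl⟩ ⟨hScomm, Or.inl rfl⟩
  · exact key _ _ ⟨hTcomm, Or.inr rfl⟩ ⟨hTcomm, Or.inr rfl⟩
  · exact (V_cnj_far hTcomm (hfar.symm) ha).symm
  · exact V_cnj_far hScomm hfar hb
  · exact V_cnj_far hTcomm hfar hb
  · rcases hfar with h | h
    · exact Vr_far h
    · exact (Vr_far h).symm

/-! ### VST side -/

def Sv (n : ℕ) (k : ℕ) : VST n :=
  if h : k < n - 1 then PresentedGroup.of (Sum.inl ⟨k, h⟩) else 1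
def Tv (n : ℕ) (k : ℕ) : VST n :=
  if h : k < n - 1 then PresentedGroup.of (Sum.inr (Sum.inl ⟨k, h⟩)) else 1
def Nv (n : ℕ) (k : ℕ) : VST n :=
  if h : k < n - 1 then PresentedGroup.of (Sum.inr (Sum.inr ⟨k, h⟩)) else 1

variable {n : ℕ}

lemma mk_vstS (i : Fin (n-1)) : PresentedGroup.mk (vstRels n) (vstS n i) = Sv n i.val := by
  simp [Sv, i.isLt]; rfl
lemma mk_vstT (i : Fin (n-1)) : PresentedGroup.mk (vstRels n) (vstT n i) = Tv n i.val := by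
  simp [Tv, i.isLt]; rfl
lemma mk_vstN (i : Fin (n-1)) : PresentedGroup.mk (vstRels n) (vstN n i) = Nv n i.val := by
  simp [Nv, i.isLt]; rfl

lemma Sv_sq (k : ℕ) : Sv n k * Sv n k = 1 := by
  by_cases h : k < n - 1
  · have := mk_rel_one (rels := vstRels n) (Or.inl ⟨⟨k, h⟩, rfl⟩)
    rw [map_mul, mk_vstS] at this; exact this
  · simp [Sv, h]

lemma Nv_sq (k : ℕ) : Nv n k * Nv n k = 1 := by
  by_cases h : k < n - 1
  · have := mk_rel_one (rels := vstRels n) (Or.inr (Or.inl ⟨⟨k, h⟩, rfl⟩))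
    rw [map_mul, mk_vstN] at this; exact this
  · simp [Nv, h]

lemma Nv_inv (k : ℕ) : (Nv n k)⁻¹ = Nv n k := inv_eq_of_mul_eq_one_right (Nv_sq k)

lemma TSv_comm (k : ℕ) : Tv n k * Sv n k = Sv n k * Tv n k := by
  by_cases h : k < n - 1
  · have := mk_rel_one (rels := vstRels n) (Or.inr (Or.inr (Or.inl ⟨⟨k, h⟩, rfl⟩)))
    simp only [map_mul, map_inv, mk_vstS, mk_vstT] at this
    rwa [mul_inv_eq_one] at this
  · simp [Sv, Tv, h]

lemma SSTv_braid {i j : Fin (n-1)} (hadj : vstAdj i j) :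
    Sv n i.val * Sv n j.val * Tv n i.val = Tv n j.val * Sv n i.val * Sv n j.val := by
  have := mk_rel_one (rels := vstRels n)
    (Or.inr (Or.inr (Or.inr (Or.inl ⟨i, j, hadj, rfl⟩))))
  simp only [map_mul, map_inv, mk_vstS, mk_vstT] at this
  rwa [mul_inv_eq_one] at this

lemma Nv_braid {i j : Fin (n-1)} (hadj : vstAdj i j) :
    Nv n i.val * Nv n j.val * Nv n i.val = Nv n j.val * Nv n i.val * Nv n j.val := by
  have := mk_rel_one (rels := vstRels n)
    (Or.inr (Or.inr (Or.inr (Or.inr (Or.inl ⟨i, j, hadj, rfl⟩)))))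
  simp only [map_mul, map_inv, mk_vstN] at this
  rwa [mul_inv_eq_one] at this

lemma NSNv {i j : Fin (n-1)} (hadj : vstAdj i j) :
    Nv n i.val * Sv n j.val * Nv n i.val = Nv n j.val * Sv n i.val * Nv n j.val := by
  have := mk_rel_one (rels := vstRels n)
    (Or.inr (Or.inr (Or.inr (Or.inr (Or.inr (Or.inl ⟨i, j, hadj, rfl⟩))))))
  simp only [map_mul, map_inv, mk_vstN, mk_vstS] at this
  rwa [mul_inv_eq_one] at this

lemma NTNv {i j : Fin (n-1)} (hadj : vstAdj i j) :
    Nv n i.val * Tv n j.val * Nv n i.val = Nv n j.val * Tv n i.val * Nv n j.val := by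
  have := mk_rel_one (rels := vstRels n)
    (Or.inr (Or.inr (Or.inr (Or.inr (Or.inr (Or.inr (Or.inl ⟨i, j, hadj, rfl⟩)))))))
  simp only [map_mul, map_inv, mk_vstN, mk_vstT] at this
  rwa [mul_inv_eq_one] at this

lemma vst_far {i j : Fin (n-1)} (hfar : vstFar i j)
    {g h : Fin (n-1) → FreeGroup (VSTGen n)}
    (hg : g ∈ ({vstS n, vstT n, vstN n} : Set (Fin (n - 1) → FreeGroup (VSTGen n))))
    (hh : h ∈ ({vstS n, vstT n, vstN n} : Set (Fin (n - 1) → FreeGroup (VSTGen n)))) :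
    PresentedGroup.mk (vstRels n) (g i) * PresentedGroup.mk (vstRels n) (h j)
      = PresentedGroup.mk (vstRels n) (h j) * PresentedGroup.mk (vstRels n) (g i) := by
  have := mk_rel_one (rels := vstRels n)
    (Or.inr (Or.inr (Or.inr (Or.inr (Or.inr (Or.inr (Or.inr
      ⟨i, j, hfar, g, hg, h, hh, rfl⟩)))))))
  simp only [map_mul, map_inv] at this
  rwa [mul_inv_eq_one] at this

lemma memS : (vstS n) ∈ ({vstS n, vstT n, vstN n} : Set (Fin (n - 1) → FreeGroup (VSTGen n))) :=
  Set.mem_insert _ _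
lemma memT : (vstT n) ∈ ({vstS n, vstT n, vstN n} : Set (Fin (n - 1) → FreeGroup (VSTGen n))) :=
  Set.mem_insert_of_mem _ (Set.mem_insert _ _)
lemma memN : (vstN n) ∈ ({vstS n, vstT n, vstN n} : Set (Fin (n - 1) → FreeGroup (VSTGen n))) :=
  Set.mem_insert_of_mem _ (Set.mem_insert_of_mem _ rfl)

/-- far commutation in VST with ℕ indices, for concrete images. -/
lemma vst_far' {a b : ℕ} (hfar : a + 2 ≤ b) (ha : a < n-1) (hb : b < n-1)
    (P Q : ℕ → VST n)
    (hP : P = Sv n ∨ P = Tv n ∨ P = Nv n) (hQ : Q = Sv n ∨ Q = Tv n ∨ Q = Nv n) :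
    P a * Q b = Q b * P a := by
  have hfar' : vstFar (⟨a, ha⟩ : Fin (n-1)) ⟨b, hb⟩ := Or.inl hfar
  rcases hP with rfl | rfl | rfl <;> rcases hQ with rfl | rfl | rfl
  · simpa [mk_vstS] using vst_far hfar' (g := vstS n) (h := vstS n) memS memS
  · simpa [mk_vstS, mk_vstT] using vst_far hfar' (g := vstS n) (h := vstT n) memS memT
  · simpa [mk_vstS, mk_vstN] using vst_far hfar' (g := vstS n) (h := vstN n) memS memN
  · simpa [mk_vstS, mk_vstT] using vst_far hfar' (g := vstT n) (h := vstS n) memT memS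
  · simpa [mk_vstT] using vst_far hfar' (g := vstT n) (h := vstT n) memT memT
  · simpa [mk_vstT, mk_vstN] using vst_far hfar' (g := vstT n) (h := vstN n) memT memN
  · simpa [mk_vstN, mk_vstS] using vst_far hfar' (g := vstN n) (h := vstS n) memN memS
  · simpa [mk_vstN, mk_vstT] using vst_far hfar' (g := vstN n) (h := vstT n) memN memT
  · simpa [mk_vstN] using vst_far hfar' (g := vstN n) (h := vstN n) memN memN

def Wv (n : ℕ) : ℕ → VST n
  | 0 => 1
  | (i+1) => Nv n i * Nv n (i+1) * Wv n i

lemma conj_up_S {i : ℕ} (hi : i + 1 < n - 1) :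
    Nv n i * Nv n (i+1) * Sv n i * Nv n (i+1) * Nv n i = Sv n (i+1) := by
  have e' : Nv n i * Sv n (i+1) * Nv n i = Nv n (i+1) * Sv n i * Nv n (i+1) :=
    NSNv (i := ⟨i, by omega⟩) (j := ⟨i+1, hi⟩) (Or.inl rfl)
  calc Nv n i * Nv n (i+1) * Sv n i * Nv n (i+1) * Nv n i
      = Nv n i * (Nv n (i+1) * Sv n i * Nv n (i+1)) * Nv n i := by group
    _ = Nv n i * (Nv n i * Sv n (i+1) * Nv n i) * Nv n i := by rw [← e']
    _ = (Nv n i * Nv n i) * Sv n (i+1) * (Nv n i * Nv n i) := by group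
    _ = Sv n (i+1) := by rw [Nv_sq]; group

lemma conj_up_T {i : ℕ} (hi : i + 1 < n - 1) :
    Nv n i * Nv n (i+1) * Tv n i * Nv n (i+1) * Nv n i = Tv n (i+1) := by
  have e' : Nv n i * Tv n (i+1) * Nv n i = Nv n (i+1) * Tv n i * Nv n (i+1) :=
    NTNv (i := ⟨i, by omega⟩) (j := ⟨i+1, hi⟩) (Or.inl rfl)
  calc Nv n i * Nv n (i+1) * Tv n i * Nv n (i+1) * Nv n i
      = Nv n i * (Nv n (i+1) * Tv n i * Nv n (i+1)) * Nv n i := by group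
    _ = Nv n i * (Nv n i * Tv n (i+1) * Nv n i) * Nv n i := by rw [← e']
    _ = (Nv n i * Nv n i) * Tv n (i+1) * (Nv n i * Nv n i) := by group
    _ = Tv n (i+1) := by rw [Nv_sq]; group

lemma Sv_W : ∀ i : ℕ, i < n - 1 → Wv n i * Sv n 0 * (Wv n i)⁻¹ = Sv n i := by
  intro i
  induction i with
  | zero => intro _; simp [Wv]
  | succ i ih =>
      intro hi
      have ih' := ih (by omega)
      have e : Wv n (i+1) * Sv n 0 * (Wv n (i+1))⁻¹
          = Nv n i * Nv n (i+1) * (Wv n i * Sv n 0 * (Wv n i)⁻¹) * Nv n (i+1) * Nv n i := by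
        show Nv n i * Nv n (i+1) * Wv n i * Sv n 0
            * (Nv n i * Nv n (i+1) * Wv n i)⁻¹ = _
        rw [mul_inv_rev, mul_inv_rev, Nv_inv, Nv_inv]; group
      rw [e, ih', conj_up_S hi]

lemma Tv_W : ∀ i : ℕ, i < n - 1 → Wv n i * Tv n 0 * (Wv n i)⁻¹ = Tv n i := by
  intro i
  induction i with
  | zero => intro _; simp [Wv]
  | succ i ih =>
      intro hi
      have ih' := ih (by omega)
      have e : Wv n (i+1) * Tv n 0 * (Wv n (i+1))⁻¹
          = Nv n i * Nv n (i+1) * (Wv n i * Tv n 0 * (Wv n i)⁻¹) * Nv n (i+1) * Nv n i := by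
        show Nv n i * Nv n (i+1) * Wv n i * Tv n 0
            * (Nv n i * Nv n (i+1) * Wv n i)⁻¹ = _
        rw [mul_inv_rev, mul_inv_rev, Nv_inv, Nv_inv]; group
      rw [e, ih', conj_up_T hi]

lemma C_eq (hn : 4 ≤ n) :
    Nv n 1 * Nv n 2 * Nv n 0 * Nv n 1 * Sv n 0 * Nv n 1 * Nv n 0 * Nv n 2 * Nv n 1
      = Sv n 2 := by
  rw [← Sv_W 2 (by omega)]
  show _ = Nv n 1 * Nv n 2 * (Nv n 0 * Nv n 1 * 1) * Sv n 0
      * (Nv n 1 * Nv n 2 * (Nv n 0 * Nv n 1 * 1))⁻¹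
  simp only [mul_inv_rev, inv_one, Nv_inv, one_mul, mul_one]
  group

lemma D_eq (hn : 4 ≤ n) :
    Nv n 1 * Nv n 2 * Nv n 0 * Nv n 1 * Tv n 0 * Nv n 1 * Nv n 0 * Nv n 2 * Nv n 1
      = Tv n 2 := by
  rw [← Tv_W 2 (by omega)]
  show _ = Nv n 1 * Nv n 2 * (Nv n 0 * Nv n 1 * 1) * Tv n 0
      * (Nv n 1 * Nv n 2 * (Nv n 0 * Nv n 1 * 1))⁻¹
  simp only [mul_inv_rev, inv_one, Nv_inv, one_mul, mul_one]
  group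

lemma A_eq (hn : 4 ≤ n) :
    Nv n 0 * Nv n 1 * Sv n 0 * Nv n 1 * Nv n 0 = Sv n 1 :=
  conj_up_S (by omega)

lemma B_eq (hn : 4 ≤ n) :
    Nv n 0 * Nv n 1 * Tv n 0 * Nv n 1 * Nv n 0 = Tv n 1 :=
  conj_up_T (by omega)

def fR (n : ℕ) : RedGen n → VST n
  | .inl _ => Sv n 0
  | .inr (.inl _) => Tv n 0
  | .inr (.inr i) => Nv n i.val

lemma lift_fR_redV (i : Fin (n-1)) : FreeGroup.lift (fR n) (redV n i) = Nv n i.val := by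
  simp [redV, fR]
lemma lift_fR_redS : FreeGroup.lift (fR n) (redS n) = Sv n 0 := by simp [redS, fR]
lemma lift_fR_redT : FreeGroup.lift (fR n) (redT n) = Tv n 0 := by simp [redT, fR]

lemma fR_rels (hn : 4 ≤ n) : ∀ r ∈ redRels n, FreeGroup.lift (fR n) r = 1 := by
  intro r hr
  have h0 : (0:ℕ) < n - 1 := by omega
  rcases hr with ⟨i, rfl⟩ | rfl | ⟨i, j, hadj, rfl⟩ | ⟨i, j, hfar, rfl⟩ | rfl |
    ⟨i, h2, rfl⟩ | ⟨i, h2, rfl⟩ | ⟨i, j, k, hi, hj, hk, hcase⟩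
  · rw [map_mul, lift_fR_redV]; exact Nv_sq _
  · rw [map_mul, lift_fR_redS]; exact Sv_sq _
  · simp only [map_mul, map_inv, lift_fR_redV]
    rw [mul_inv_eq_one]
    exact Nv_braid hadj
  · simp only [map_mul, map_inv, lift_fR_redV]
    rw [mul_inv_eq_one]
    rcases hfar with h | h
    · exact vst_far' h i.isLt j.isLt (Nv n) (Nv n) (Or.inr (Or.inr rfl)) (Or.inr (Or.inr rfl))
    · exact (vst_far' h j.isLt i.isLt (Nv n) (Nv n) (Or.inr (Or.inr rfl))
        (Or.inr (Or.inr rfl))).symm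
  · simp only [map_mul, map_inv, lift_fR_redS, lift_fR_redT]
    rw [mul_inv_eq_one]
    exact (TSv_comm 0).symm
  · simp only [map_mul, map_inv, lift_fR_redV, lift_fR_redT]
    rw [mul_inv_eq_one]
    exact vst_far' h2 h0 i.isLt (Tv n) (Nv n) (Or.inr (Or.inl rfl)) (Or.inr (Or.inr rfl))
  · simp only [map_mul, map_inv, lift_fR_redV, lift_fR_redS]
    rw [mul_inv_eq_one]
    exact vst_far' h2 h0 i.isLt (Sv n) (Nv n) (Or.inl rfl) (Or.inr (Or.inr rfl))
  · have h2' : (2:ℕ) < n - 1 := by omega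
    rcases hcase with rfl | rfl | rfl | rfl
    · simp only [map_mul, map_inv, lift_fR_redV, lift_fR_redS, lift_fR_redT, hi, hj]
      rw [mul_inv_eq_one]
      have hA : Nv n 0 * Nv n 1 * Sv n 0 * Nv n 1 * Nv n 0 = Sv n 1 := A_eq hn
      have hB : Nv n 0 * Nv n 1 * Tv n 0 * Nv n 1 * Nv n 0 = Tv n 1 := B_eq hn
      calc Tv n 0 * (Nv n 0 * Nv n 1 * Sv n 0 * Nv n 1 * Nv n 0) * Sv n 0
          = Tv n 0 * Sv n 1 * Sv n 0 := by rw [hA]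
        _ = Sv n 1 * Sv n 0 * Tv n 1 := by
            exact (SSTv_braid (i := ⟨1, by omega⟩) (j := ⟨0, h0⟩) (Or.inr rfl)).symm
        _ = Nv n 0 * Nv n 1 * Sv n 0 * Nv n 1 * Nv n 0 * Sv n 0
              * (Nv n 0 * Nv n 1 * Tv n 0 * Nv n 1 * Nv n 0) := by rw [hA, hB]
    · simp only [map_mul, map_inv, lift_fR_redV, lift_fR_redS, lift_fR_redT, hi, hj, hk]
      rw [mul_inv_eq_one]
      have hC := C_eq hn
      calc Sv n 0 * (Nv n 1 * Nv n 2 * Nv n 0 * Nv n 1 * Sv n 0 * Nv n 1 * Nv n 0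
              * Nv n 2 * Nv n 1)
          = Sv n 0 * Sv n 2 := by rw [hC]
        _ = Sv n 2 * Sv n 0 := vst_far' (by norm_num) h0 h2' (Sv n) (Sv n)
              (Or.inl rfl) (Or.inl rfl)
        _ = Nv n 1 * Nv n 2 * Nv n 0 * Nv n 1 * Sv n 0 * Nv n 1 * Nv n 0 * Nv n 2 * Nv n 1
              * Sv n 0 := by rw [hC]
    · simp only [map_mul, map_inv, lift_fR_redV, lift_fR_redS, lift_fR_redT, hi, hj, hk]
      rw [mul_inv_eq_one]
      have hC := C_eq hn
      calc Tv n 0 * (Nv n 1 * Nv n 2 * Nv n 0 * Nv n 1 * Sv n 0 * Nv n 1 * Nv n 0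
              * Nv n 2 * Nv n 1)
          = Tv n 0 * Sv n 2 := by rw [hC]
        _ = Sv n 2 * Tv n 0 := vst_far' (by norm_num) h0 h2' (Tv n) (Sv n)
              (Or.inr (Or.inl rfl)) (Or.inl rfl)
        _ = Nv n 1 * Nv n 2 * Nv n 0 * Nv n 1 * Sv n 0 * Nv n 1 * Nv n 0 * Nv n 2 * Nv n 1
              * Tv n 0 := by rw [hC]
    · simp only [map_mul, map_inv, lift_fR_redV, lift_fR_redS, lift_fR_redT, hi, hj, hk]
      rw [mul_inv_eq_one]
      have hD := D_eq hn
      calc Tv n 0 * (Nv n 1 * Nv n 2 * Nv n 0 * Nv n 1 * Tv n 0 * Nv n 1 * Nv n 0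
              * Nv n 2 * Nv n 1)
          = Tv n 0 * Tv n 2 := by rw [hD]
        _ = Tv n 2 * Tv n 0 := vst_far' (by norm_num) h0 h2' (Tv n) (Tv n)
              (Or.inr (Or.inl rfl)) (Or.inr (Or.inl rfl))
        _ = Nv n 1 * Nv n 2 * Nv n 0 * Nv n 1 * Tv n 0 * Nv n 1 * Nv n 0 * Nv n 2 * Nv n 1
              * Tv n 0 := by rw [hD]

def phi (n : ℕ) (hn : 4 ≤ n) : PresentedGroup (redRels n) →* VST n :=
  PresentedGroup.toGroup (fR_rels hn)

def fV (n : ℕ) : VSTGen n → PresentedGroup (redRels n)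
  | .inl i => cnj n (Sr n) i.val
  | .inr (.inl i) => cnj n (Tr n) i.val
  | .inr (.inr i) => Vr n i.val

lemma lift_fV_S (i : Fin (n-1)) : FreeGroup.lift (fV n) (vstS n i) = cnj n (Sr n) i.val := by
  simp [vstS, fV]
lemma lift_fV_T (i : Fin (n-1)) : FreeGroup.lift (fV n) (vstT n i) = cnj n (Tr n) i.val := by
  simp [vstT, fV]
lemma lift_fV_N (i : Fin (n-1)) : FreeGroup.lift (fV n) (vstN n i) = Vr n i.val := by
  simp [vstN, fV]

lemma fV_rels (hn : 4 ≤ n) : ∀ r ∈ vstRels n, FreeGroup.lift (fV n) r = 1 := by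
  intro r hr
  rcases hr with ⟨i, rfl⟩ | ⟨i, rfl⟩ | ⟨i, rfl⟩ | ⟨i, j, hadj, rfl⟩ | ⟨i, j, hadj, rfl⟩ |
    ⟨i, j, hadj, rfl⟩ | ⟨i, j, hadj, rfl⟩ | ⟨i, j, hfar, g, hg, h, hh, rfl⟩
  · rw [map_mul, lift_fV_S]; exact cnj_sq Sr_sq _
  · rw [map_mul, lift_fV_N]; exact Vr_sq _
  · simp only [map_mul, map_inv, lift_fV_S, lift_fV_T]
    rw [mul_inv_eq_one]
    exact cnj_comm (ST_comm (n := n)).symm i.val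
  · simp only [map_mul, map_inv, lift_fV_S, lift_fV_T]
    rw [mul_inv_eq_one]
    rcases hadj with hij | hij
    · rw [← hij]
      exact MB' hn i.val (by have := j.isLt; omega)
    · rw [← hij]
      exact (MB hn j.val (by have := i.isLt; omega)).symm
  · simp only [map_mul, map_inv, lift_fV_N]
    rw [mul_inv_eq_one]
    rcases hadj with hij | hij
    · rw [← hij]; exact Vr_braid (by have := j.isLt; omega)
    · rw [← hij]; exact (Vr_braid (by have := i.isLt; omega)).symm
  · simp only [map_mul, map_inv, lift_fV_N, lift_fV_S]
    rw [mul_inv_eq_one]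
    rcases hadj with hij | hij
    · rw [← hij]; exact adj_conj i.val
    · rw [← hij]; exact (adj_conj j.val).symm
  · simp only [map_mul, map_inv, lift_fV_N, lift_fV_T]
    rw [mul_inv_eq_one]
    rcases hadj with hij | hij
    · rw [← hij]; exact adj_conj i.val
    · rw [← hij]; exact (adj_conj j.val).symm
  · have himg : ∀ (g : Fin (n-1) → FreeGroup (VSTGen n)),
        g ∈ ({vstS n, vstT n, vstN n} : Set (Fin (n - 1) → FreeGroup (VSTGen n))) →
        ∃ P : ℕ → PresentedGroup (redRels n),
          (P = cnj n (Sr n) ∨ P = cnj n (Tr n) ∨ P = Vr n) ∧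
          ∀ i : Fin (n-1), FreeGroup.lift (fV n) (g i) = P i.val := by
      intro g hg
      rcases hg with rfl | rfl | rfl
      · exact ⟨cnj n (Sr n), Or.inl rfl, lift_fV_S⟩
      · exact ⟨cnj n (Tr n), Or.inr (Or.inl rfl), lift_fV_T⟩
      · exact ⟨Vr n, Or.inr (Or.inr rfl), lift_fV_N⟩
    obtain ⟨P, hP, hPe⟩ := himg g hg
    obtain ⟨Q, hQ, hQe⟩ := himg h hh
    simp only [map_mul, map_inv, hPe, hQe]
    rw [mul_inv_eq_one]
    exact big_far hn hfar i.isLt j.isLt P Q hP hQ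

def psi (n : ℕ) (hn : 4 ≤ n) : VST n →* PresentedGroup (redRels n) :=
  PresentedGroup.toGroup (fV_rels hn)

lemma phi_of (hn : 4 ≤ n) (x : RedGen n) :
    phi n hn (PresentedGroup.of x) = fR n x := PresentedGroup.toGroup.of _
lemma psi_of (hn : 4 ≤ n) (x : VSTGen n) :
    psi n hn (PresentedGroup.of x) = fV n x := PresentedGroup.toGroup.of _

lemma phi_Vr (hn : 4 ≤ n) (k : ℕ) : phi n hn (Vr n k) = Nv n k := by
  by_cases h : k < n - 1
  · rw [show Vr n k = PresentedGroup.of (Sum.inr (Sum.inr ⟨k,h⟩)) by simp [Vr, h],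
      phi_of]
    show Nv n (⟨k,h⟩ : Fin (n-1)).val = Nv n k
    rfl
  · rw [show Vr n k = 1 by simp [Vr, h], map_one]
    simp [Nv, h]

lemma phi_Sr (hn : 4 ≤ n) : phi n hn (Sr n) = Sv n 0 := phi_of hn _
lemma phi_Tr (hn : 4 ≤ n) : phi n hn (Tr n) = Tv n 0 := phi_of hn _

lemma phi_Wr (hn : 4 ≤ n) (i : ℕ) : phi n hn (Wr n i) = Wv n i := by
  induction i with
  | zero => show phi n hn 1 = 1; exact map_one _
  | succ i ih =>
      show phi n hn (Vr n i * Vr n (i+1) * Wr n i) = Nv n i * Nv n (i+1) * Wv n i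
      rw [map_mul, map_mul, phi_Vr, phi_Vr, ih]

lemma phi_cnjS (hn : 4 ≤ n) {i : ℕ} (hi : i < n - 1) :
    phi n hn (cnj n (Sr n) i) = Sv n i := by
  show phi n hn (Wr n i * Sr n * (Wr n i)⁻¹) = _
  rw [map_mul, map_mul, map_inv, phi_Wr, phi_Sr, Sv_W i hi]

lemma phi_cnjT (hn : 4 ≤ n) {i : ℕ} (hi : i < n - 1) :
    phi n hn (cnj n (Tr n) i) = Tv n i := by
  show phi n hn (Wr n i * Tr n * (Wr n i)⁻¹) = _
  rw [map_mul, map_mul, map_inv, phi_Wr, phi_Tr, Tv_W i hi]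

lemma phi_psi (hn : 4 ≤ n) : (phi n hn).comp (psi n hn) = MonoidHom.id (VST n) := by
  apply PresentedGroup.ext
  intro x
  rw [MonoidHom.comp_apply, MonoidHom.id_apply, psi_of]
  rcases x with i | i | i
  · show phi n hn (cnj n (Sr n) i.val) = _
    rw [phi_cnjS hn i.isLt]
    exact (mk_vstS i).symm
  · show phi n hn (cnj n (Tr n) i.val) = _
    rw [phi_cnjT hn i.isLt]
    exact (mk_vstT i).symm
  · show phi n hn (Vr n i.val) = _
    rw [phi_Vr]
    exact (mk_vstN i).symm

lemma psi_phi (hn : 4 ≤ n) : (psi n hn).comp (phi n hn) = MonoidHom.id _ := by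
  apply PresentedGroup.ext
  intro x
  rw [MonoidHom.comp_apply, MonoidHom.id_apply, phi_of]
  rcases x with _ | _ | i
  · show psi n hn (Sv n 0) = Sr n
    have h0 : (0:ℕ) < n - 1 := by omega
    rw [show Sv n 0 = PresentedGroup.of (Sum.inl ⟨0, h0⟩) by simp [Sv, h0], psi_of]
    show cnj n (Sr n) (⟨0,h0⟩ : Fin (n-1)).val = Sr n
    exact cnj_zero
  · show psi n hn (Tv n 0) = Tr n
    have h0 : (0:ℕ) < n - 1 := by omega
    rw [show Tv n 0 = PresentedGroup.of (Sum.inr (Sum.inl ⟨0, h0⟩)) by simp [Tv, h0], psi_of]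
    show cnj n (Tr n) (⟨0,h0⟩ : Fin (n-1)).val = Tr n
    exact cnj_zero
  · show psi n hn (Nv n i.val) = PresentedGroup.of (Sum.inr (Sum.inr i))
    rw [show Nv n i.val = PresentedGroup.of (Sum.inr (Sum.inr i)) from (mk_vstN i).symm, psi_of]
    show Vr n i.val = _
    exact Vr_of i

end Thm61

/-- (Theorem 6.1.) The reduced presentation defines a group isomorphic to `VST_n`, via
`S ↦ s₁`, `T ↦ τ₁`, `V_i ↦ ν_i`. -/
theorem reduced_presentation_iso (n : ℕ) (hn : 4 ≤ n) :
    ∃ Φ : PresentedGroup (redRels n) ≃* VST n,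
      Φ (PresentedGroup.of (Sum.inl ()))
        = PresentedGroup.of (Sum.inl (⟨0, by omega⟩ : Fin (n - 1))) ∧
      Φ (PresentedGroup.of (Sum.inr (Sum.inl ())))
        = PresentedGroup.of (Sum.inr (Sum.inl (⟨0, by omega⟩ : Fin (n - 1)))) ∧
      ∀ i : Fin (n - 1),
        Φ (PresentedGroup.of (Sum.inr (Sum.inr i)))
          = PresentedGroup.of (Sum.inr (Sum.inr i)) := by
  have h0 : (0:ℕ) < n - 1 := by omega
  refine ⟨{ toFun := Thm61.phi n hn, invFun := Thm61.psi n hn,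
            left_inv := fun x => ?_, right_inv := fun x => ?_,
            map_mul' := map_mul _ }, ?_, ?_, ?_⟩
  · rw [← MonoidHom.comp_apply, Thm61.psi_phi hn, MonoidHom.id_apply]
  · rw [← MonoidHom.comp_apply, Thm61.phi_psi hn, MonoidHom.id_apply]
  · show Thm61.phi n hn (PresentedGroup.of (Sum.inl ())) = _
    rw [Thm61.phi_of]
    show Thm61.Sv n 0 = _
    simp [Thm61.Sv, h0]
  · show Thm61.phi n hn (PresentedGroup.of (Sum.inr (Sum.inl ()))) = _
    rw [Thm61.phi_of]
    show Thm61.Tv n 0 = _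
    simp [Thm61.Tv, h0]
  · intro i
    show Thm61.phi n hn (PresentedGroup.of (Sum.inr (Sum.inr i))) = _
    rw [Thm61.phi_of]
    show Thm61.Nv n i.val = _
    exact (Thm61.mk_vstN i).symm
end

section
/- (Lemma 6.7: relations satisfied by the connecting strings.) Let M be a monoid, n ≥ 2, and let s_i, τ_i, ν_i ∈ M (1 ≤ i ≤ n−1) satisfy all the defining relations of VST_n listed in the context. Define the connecting strings μ_i := s_i ν_i and γ_i := τ_i ν_i. Then: (i) ν_i μ_j ν_i = ν_j μ_i ν_j and ν_i γ_j ν_i = ν_j γ_i ν_j for all |i−j| = 1; (ii) μ_j (ν_j μ_i ν_j) γ_i = γ_i (ν_j μ_i ν_j) μ_j for all |i−j| = 1; (iii) μ_i ν_i γ_i = γ_i ν_i μ_i for all 1 ≤ i ≤ n−1; (iv) α_i β_j = β_j α_i for all |i−j| ≥ 2, where α_i ∈ {μ_i, γ_i, ν_i} and β_j ∈ {μ_j, γ_j, ν_j}. -/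
/-- Cancellation for an involution. -/
lemma vst_cancel {M : Type*} [Monoid M] {b : M} (hb : b * b = 1) :
    ∀ x : M, b * (b * x) = x := fun x => by rw [← mul_assoc, hb, one_mul]

/-- Push lemma: from `b c b = a d a` with `a, b` involutions, get `a b c = d a b`
(in right-associated form with a tail `x`). -/
lemma vst_push {M : Type*} [Monoid M] {a b c d : M} (ha : a * a = 1) (hb : b * b = 1)
    (h : b * c * b = a * d * a) : ∀ x : M, a * (b * (c * x)) = d * (a * (b * x)) := by
  intro x
  have : a * (b * c) = d * (a * b) := by
    calc a * (b * c) = a * ((b * c * b) * b) := by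
          rw [mul_assoc, mul_assoc, hb, mul_one]
      _ = a * (a * d * a * b) := by rw [h]
      _ = (a * a) * d * (a * b) := by simp only [mul_assoc]
      _ = d * (a * b) := by rw [ha, one_mul]
  calc a * (b * (c * x)) = (a * (b * c)) * x := by simp only [mul_assoc]
    _ = (d * (a * b)) * x := by rw [this]
    _ = d * (a * (b * x)) := by simp only [mul_assoc]

/-- Right-associated braid relation with a tail. -/
lemma vst_braid {M : Type*} [Monoid M] {a b : M} (h : a * b * a = b * a * b) :
    ∀ x : M, a * (b * (a * x)) = b * (a * (b * x)) := by
  intro x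
  calc a * (b * (a * x)) = (a * b * a) * x := by simp only [mul_assoc]
    _ = (b * a * b) * x := by rw [h]
    _ = b * (a * (b * x)) := by simp only [mul_assoc]

/-- (Lemma 6.7.) In a monoid whose elements `s_i, τ_i, ν_i` satisfy all the defining
relations of the virtual singular twin monoid, the connecting strings `μ_i := s_i ν_i`
and `γ_i := τ_i ν_i` satisfy the detour relations (i), the mixed relation (ii), the
relation (iii), and the far-commutation relations (iv). -/
theorem connecting_strings_relations {M : Type*} [Monoid M] (n : ℕ) (hn : 2 ≤ n)
    (s τ ν : ℕ → M)
    (hs2 : ∀ i, 1 ≤ i → i ≤ n - 1 → s i * s i = 1)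
    (hν2 : ∀ i, 1 ≤ i → i ≤ n - 1 → ν i * ν i = 1)
    (hτs : ∀ i, 1 ≤ i → i ≤ n - 1 → τ i * s i = s i * τ i)
    (hssτ : ∀ i j, 1 ≤ i → i ≤ n - 1 → 1 ≤ j → j ≤ n - 1 → (i + 1 = j ∨ j + 1 = i) →
      s i * s j * τ i = τ j * s i * s j)
    (hννν : ∀ i j, 1 ≤ i → i ≤ n - 1 → 1 ≤ j → j ≤ n - 1 → (i + 1 = j ∨ j + 1 = i) →
      ν i * ν j * ν i = ν j * ν i * ν j)
    (hνsν : ∀ i j, 1 ≤ i → i ≤ n - 1 → 1 ≤ j → j ≤ n - 1 → (i + 1 = j ∨ j + 1 = i) →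
      ν i * s j * ν i = ν j * s i * ν j)
    (hντν : ∀ i j, 1 ≤ i → i ≤ n - 1 → 1 ≤ j → j ≤ n - 1 → (i + 1 = j ∨ j + 1 = i) →
      ν i * τ j * ν i = ν j * τ i * ν j)
    (hcomm : ∀ i j, 1 ≤ i → i ≤ n - 1 → 1 ≤ j → j ≤ n - 1 → (i + 2 ≤ j ∨ j + 2 ≤ i) →
      ∀ g ∈ ({s i, τ i, ν i} : Set M), ∀ h ∈ ({s j, τ j, ν j} : Set M),
        g * h = h * g) :
    (∀ i j, 1 ≤ i → i ≤ n - 1 → 1 ≤ j → j ≤ n - 1 → (i + 1 = j ∨ j + 1 = i) →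
      ν i * (s j * ν j) * ν i = ν j * (s i * ν i) * ν j ∧
      ν i * (τ j * ν j) * ν i = ν j * (τ i * ν i) * ν j) ∧
    (∀ i j, 1 ≤ i → i ≤ n - 1 → 1 ≤ j → j ≤ n - 1 → (i + 1 = j ∨ j + 1 = i) →
      (s j * ν j) * (ν j * (s i * ν i) * ν j) * (τ i * ν i)
        = (τ i * ν i) * (ν j * (s i * ν i) * ν j) * (s j * ν j)) ∧
    (∀ i, 1 ≤ i → i ≤ n - 1 →
      (s i * ν i) * ν i * (τ i * ν i) = (τ i * ν i) * ν i * (s i * ν i)) ∧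
    (∀ i j, 1 ≤ i → i ≤ n - 1 → 1 ≤ j → j ≤ n - 1 → (i + 2 ≤ j ∨ j + 2 ≤ i) →
      ∀ a ∈ ({s i * ν i, τ i * ν i, ν i} : Set M),
      ∀ b ∈ ({s j * ν j, τ j * ν j, ν j} : Set M),
        a * b = b * a) := by
  refine ⟨?_, ?_, ?_, ?_⟩
  · -- part (i)
    intro i j hi1 hi2 hj1 hj2 hij
    have ci := vst_cancel (hν2 i hi1 hi2)
    have cj := vst_cancel (hν2 j hj1 hj2)
    have hb := hννν i j hi1 hi2 hj1 hj2 hij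
    have hb3 : ν i * (ν j * ν i) = ν j * (ν i * ν j) := by
      rw [← mul_assoc, hb, mul_assoc]
    constructor
    · have h1 := hνsν i j hi1 hi2 hj1 hj2 hij
      calc ν i * (s j * ν j) * ν i
          = (ν i * s j * ν i) * (ν i * (ν j * ν i)) := by
            simp only [mul_assoc]; rw [ci]
        _ = (ν j * s i * ν j) * (ν j * (ν i * ν j)) := by
            rw [h1, hb3]
        _ = ν j * (s i * ν i) * ν j := by
            simp only [mul_assoc]; rw [cj]
    · have h1 := hντν i j hi1 hi2 hj1 hj2 hij
      calc ν i * (τ j * ν j) * ν i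
          = (ν i * τ j * ν i) * (ν i * (ν j * ν i)) := by
            simp only [mul_assoc]; rw [ci]
        _ = (ν j * τ i * ν j) * (ν j * (ν i * ν j)) := by
            rw [h1, hb3]
        _ = ν j * (τ i * ν i) * ν j := by
            simp only [mul_assoc]; rw [cj]
  · -- part (ii)
    intro i j hi1 hi2 hj1 hj2 hij
    have hji := Or.symm hij
    have ci := vst_cancel (hν2 i hi1 hi2)
    have cj := vst_cancel (hν2 j hj1 hj2)
    -- push lemmas: ν i ν j (s i) = s j ν i ν j  and  ν i ν j (τ i) = τ j ν i ν j
    have Ps : ∀ x, ν i * (ν j * (s i * x)) = s j * (ν i * (ν j * x)) :=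
      vst_push (hν2 i hi1 hi2) (hν2 j hj1 hj2) (hνsν j i hj1 hj2 hi1 hi2 hji)
    have Pt : ∀ x, ν i * (ν j * (τ i * x)) = τ j * (ν i * (ν j * x)) :=
      vst_push (hν2 i hi1 hi2) (hν2 j hj1 hj2) (hντν j i hj1 hj2 hi1 hi2 hji)
    have Ps' : ∀ x, ν j * (ν i * (s j * x)) = s i * (ν j * (ν i * x)) :=
      vst_push (hν2 j hj1 hj2) (hν2 i hi1 hi2) (hνsν i j hi1 hi2 hj1 hj2 hij)
    have hbx := vst_braid (hννν i j hi1 hi2 hj1 hj2 hij)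
    -- s j s i τ j = τ i s j s i, right-associated with tail
    have hsst : ∀ x, s j * (s i * (τ j * x)) = τ i * (s j * (s i * x)) := by
      intro x
      have h := hssτ j i hj1 hj2 hi1 hi2 hji
      calc s j * (s i * (τ j * x)) = (s j * s i * τ j) * x := by simp only [mul_assoc]
        _ = (τ i * s j * s i) * x := by rw [h]
        _ = τ i * (s j * (s i * x)) := by simp only [mul_assoc]
    have hb3 : ν i * (ν j * ν i) = ν j * (ν i * ν j) := by
      rw [← mul_assoc, hννν i j hi1 hi2 hj1 hj2 hij, mul_assoc]
    calc (s j * ν j) * (ν j * (s i * ν i) * ν j) * (τ i * ν i)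
        = s j * (s i * (ν i * (ν j * (τ i * ν i)))) := by
          simp only [mul_assoc]; rw [cj]
      _ = s j * (s i * (τ j * (ν i * (ν j * ν i)))) := by rw [Pt]
      _ = τ i * (s j * (s i * (ν i * (ν j * ν i)))) := by rw [hsst]
      _ = τ i * (s j * (s i * (ν j * (ν i * ν j)))) := by rw [hb3]
      _ = τ i * (s j * (ν j * (ν i * (s j * ν j)))) := by rw [← Ps']
      _ = τ i * (s j * (ν j * (ν i * (ν j * (ν j * (s j * ν j)))))) := by rw [cj]
      _ = τ i * (s j * (ν i * (ν j * (ν i * (ν j * (s j * ν j)))))) := by rw [hbx]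
      _ = τ i * (ν i * (ν j * (s i * (ν i * (ν j * (s j * ν j)))))) := by rw [Ps]
      _ = (τ i * ν i) * (ν j * (s i * ν i) * ν j) * (s j * ν j) := by
          simp only [mul_assoc]
  · -- part (iii)
    intro i hi1 hi2
    have ci := vst_cancel (hν2 i hi1 hi2)
    have h := hτs i hi1 hi2
    calc (s i * ν i) * ν i * (τ i * ν i)
        = s i * (ν i * (ν i * (τ i * ν i))) := by simp only [mul_assoc]
      _ = s i * τ i * ν i := by rw [ci, ← mul_assoc]
      _ = τ i * s i * ν i := by rw [h]
      _ = (τ i * ν i) * ν i * (s i * ν i) := by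
          simp only [mul_assoc]; rw [ci]
  · -- part (iv)
    intro i j hi1 hi2 hj1 hj2 hij a ha b hb
    have key : ∀ g ∈ ({s i, τ i, ν i} : Set M), ∀ h ∈ ({s j, τ j, ν j} : Set M),
        Commute g h := hcomm i j hi1 hi2 hj1 hj2 hij
    have K : ∀ h ∈ ({s j, τ j, ν j} : Set M), Commute a h := by
      intro h hh
      simp only [Set.mem_insert_iff, Set.mem_singleton_iff] at ha
      rcases ha with rfl | rfl | rfl
      · exact (key (s i) (by simp) h hh).mul_left (key (ν i) (by simp) h hh)
      · exact (key (τ i) (by simp) h hh).mul_left (key (ν i) (by simp) h hh)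
      · exact key (ν i) (by simp) h hh
    simp only [Set.mem_insert_iff, Set.mem_singleton_iff] at hb
    rcases hb with rfl | rfl | rfl
    · exact ((K (s j) (by simp)).mul_right (K (ν j) (by simp))).eq
    · exact ((K (τ j) (by simp)).mul_right (K (ν j) (by simp))).eq
    · exact (K (ν j) (by simp)).eq
end

section
/- (Surjective homomorphism from the connecting-strings presentation, part of Theorem 6.9.) Let n ≥ 2 and let M_n be the presented group with generators μ₁, …, μ_{n−1}, γ₁, …, γ_{n−1}, ν₁, …, ν_{n−1} and relations: ν_i² = 1 for all i; ν_i ν_j ν_i = ν_j ν_i ν_j for |i−j| = 1; ν_i μ_j ν_i = ν_j μ_i ν_j and ν_i γ_j ν_i = ν_j γ_i ν_j for |i−j| = 1; μ_j (ν_j μ_i ν_j) γ_i = γ_i (ν_j μ_i ν_j) μ_j for |i−j| = 1; μ_i ν_i γ_i = γ_i ν_i μ_i for all i; and α_i β_j = β_j α_i for |i−j| ≥ 2 with α ∈ {μ, γ, ν} and β ∈ {μ, γ, ν}. Then there exists a surjective group homomorphism F : M_n → VST_n with F(μ_i) = s_i ν_i, F(γ_i) = τ_i ν_i, and F(ν_i)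 = ν_i for all 1 ≤ i ≤ n−1. -/
/-! ## The connecting-strings presentation `M_n` -/

/-- Generators `μ_i`, `γ_i`, `ν_i` of the connecting-strings presentation. -/
abbrev CSGen (n : ℕ) := Fin (n - 1) ⊕ Fin (n - 1) ⊕ Fin (n - 1)

def csM (n : ℕ) (i : Fin (n - 1)) : FreeGroup (CSGen n) := FreeGroup.of (Sum.inl i)
def csG (n : ℕ) (i : Fin (n - 1)) : FreeGroup (CSGen n) := FreeGroup.of (Sum.inr (Sum.inl i))
def csN (n : ℕ) (i : Fin (n - 1)) : FreeGroup (CSGen n) := FreeGroup.of (Sum.inr (Sum.inr i))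

/-- The relations of the connecting-strings presentation (Definition 6.8). -/
def csRels (n : ℕ) : Set (FreeGroup (CSGen n)) :=
  {r | (∃ i, r = csN n i * csN n i) ∨
       (∃ i j, vstAdj i j ∧
          r = csN n i * csN n j * csN n i * (csN n j * csN n i * csN n j)⁻¹) ∨
       (∃ i j, vstAdj i j ∧
          r = csN n i * csM n j * csN n i * (csN n j * csM n i * csN n j)⁻¹) ∨
       (∃ i j, vstAdj i j ∧
          r = csN n i * csG n j * csN n i * (csN n j * csG n i * csN n j)⁻¹) ∨
       (∃ i j, vstAdj i j ∧
          r = csM n j * (csN n j * csM n i * csN n j) * csG n i *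
              (csG n i * (csN n j * csM n i * csN n j) * csM n j)⁻¹) ∨
       (∃ i, r = csM n i * csN n i * csG n i * (csG n i * csN n i * csM n i)⁻¹) ∨
       (∃ i j, vstFar i j ∧
          ∃ a ∈ ({csM n, csG n, csN n} : Set (Fin (n - 1) → FreeGroup (CSGen n))),
          ∃ b ∈ ({csM n, csG n, csN n} : Set (Fin (n - 1) → FreeGroup (CSGen n))),
            r = a i * b j * (b j * a i)⁻¹)}

namespace CS69

variable {n : ℕ}

def S (i : Fin (n - 1)) : VST n := PresentedGroup.of (Sum.inl i)
def T (i : Fin (n - 1)) : VST n := PresentedGroup.of (Sum.inr (Sum.inl i))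
def N (i : Fin (n - 1)) : VST n := PresentedGroup.of (Sum.inr (Sum.inr i))

lemma relOne {r : FreeGroup (VSTGen n)} (h : r ∈ vstRels n) :
    PresentedGroup.mk (vstRels n) r = 1 :=
  (QuotientGroup.eq_one_iff r).mpr (Subgroup.subset_normalClosure h)

lemma mkS (i : Fin (n - 1)) : PresentedGroup.mk (vstRels n) (vstS n i) = S i := rfl
lemma mkT (i : Fin (n - 1)) : PresentedGroup.mk (vstRels n) (vstT n i) = T i := rfl
lemma mkN (i : Fin (n - 1)) : PresentedGroup.mk (vstRels n) (vstN n i) = N i := rfl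

lemma vstAdj.symm {i j : Fin (n - 1)} (h : vstAdj i j) : vstAdj j i := Or.symm h

@[simp] lemma hS2 (i : Fin (n - 1)) : S (n := n) i * S i = 1 := by
  have := relOne (n := n) (Or.inl ⟨i, rfl⟩)
  simpa [mkS] using this

@[simp] lemma hN2 (i : Fin (n - 1)) : N (n := n) i * N i = 1 := by
  have := relOne (n := n) (Or.inr (Or.inl ⟨i, rfl⟩))
  simpa [mkN] using this

@[simp] lemma Ncan (i : Fin (n - 1)) (x : VST n) : N i * (N i * x) = x := by
  rw [← mul_assoc, hN2, one_mul]

@[simp] lemma Scan (i : Fin (n - 1)) (x : VST n) : S i * (S i * x) = x := by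
  rw [← mul_assoc, hS2, one_mul]

lemma hTS (i : Fin (n - 1)) : T (n := n) i * S i = S i * T i := by
  have := relOne (n := n) (Or.inr (Or.inr (Or.inl ⟨i, rfl⟩)))
  simp only [map_mul, map_inv, mkS, mkT] at this
  rwa [mul_inv_eq_one] at this

lemma hSST {i j : Fin (n - 1)} (h : vstAdj i j) :
    S (n := n) i * S j * T i = T j * S i * S j := by
  have := relOne (n := n) (Or.inr (Or.inr (Or.inr (Or.inl ⟨i, j, h, rfl⟩))))
  simp only [map_mul, map_inv, mkS, mkT] at this
  rwa [mul_inv_eq_one] at this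

lemma hNNN {i j : Fin (n - 1)} (h : vstAdj i j) :
    N (n := n) i * N j * N i = N j * N i * N j := by
  have := relOne (n := n) (Or.inr (Or.inr (Or.inr (Or.inr (Or.inl ⟨i, j, h, rfl⟩)))))
  simp only [map_mul, map_inv, mkN] at this
  rwa [mul_inv_eq_one] at this

lemma hNSN {i j : Fin (n - 1)} (h : vstAdj i j) :
    N (n := n) i * S j * N i = N j * S i * N j := by
  have := relOne (n := n)
    (Or.inr (Or.inr (Or.inr (Or.inr (Or.inr (Or.inl ⟨i, j, h, rfl⟩))))))
  simp only [map_mul, map_inv, mkS, mkN] at this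
  rwa [mul_inv_eq_one] at this

lemma hNTN {i j : Fin (n - 1)} (h : vstAdj i j) :
    N (n := n) i * T j * N i = N j * T i * N j := by
  have := relOne (n := n)
    (Or.inr (Or.inr (Or.inr (Or.inr (Or.inr (Or.inr (Or.inl ⟨i, j, h, rfl⟩)))))))
  simp only [map_mul, map_inv, mkT, mkN] at this
  rwa [mul_inv_eq_one] at this

lemma far_comm {i j : Fin (n - 1)} (hf : vstFar i j)
    {g h : Fin (n - 1) → FreeGroup (VSTGen n)}
    (hg : g ∈ ({vstS n, vstT n, vstN n} : Set (Fin (n - 1) → FreeGroup (VSTGen n))))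
    (hh : h ∈ ({vstS n, vstT n, vstN n} : Set (Fin (n - 1) → FreeGroup (VSTGen n)))) :
    PresentedGroup.mk (vstRels n) (g i) * PresentedGroup.mk (vstRels n) (h j)
      = PresentedGroup.mk (vstRels n) (h j) * PresentedGroup.mk (vstRels n) (g i) := by
  have := relOne (n := n)
    (Or.inr (Or.inr (Or.inr (Or.inr (Or.inr (Or.inr (Or.inr
      ⟨i, j, hf, g, hg, h, hh, rfl⟩)))))))
  simp only [map_mul, map_inv] at this
  rwa [mul_inv_eq_one] at this

end CS69
namespace CS69

lemma hNNN' {i j : Fin (n - 1)} (h : vstAdj i j) (x : VST n) :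
    N i * (N j * (N i * x)) = N j * (N i * (N j * x)) := by
  simp only [← mul_assoc]; rw [hNNN h]

lemma hSST' {i j : Fin (n - 1)} (h : vstAdj i j) (x : VST n) :
    S i * (S j * (T i * x)) = T j * (S i * (S j * x)) := by
  simp only [← mul_assoc]; rw [hSST h]

lemma moveS' {i j : Fin (n - 1)} (h : vstAdj i j) (x : VST n) :
    N i * (N j * (S i * x)) = S j * (N i * (N j * x)) := by
  have e : N i * (N j * (S i * x)) = N i * ((N j * S i * N j) * (N j * x)) := by
    simp [mul_assoc]
  rw [e, hNSN h.symm]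
  simp [mul_assoc]

lemma moveT' {i j : Fin (n - 1)} (h : vstAdj i j) (x : VST n) :
    N i * (N j * (T i * x)) = T j * (N i * (N j * x)) := by
  have e : N i * (N j * (T i * x)) = N i * ((N j * T i * N j) * (N j * x)) := by
    simp [mul_assoc]
  rw [e, hNTN h.symm]
  simp [mul_assoc]

def fmap (n : ℕ) : CSGen n → VST n :=
  Sum.elim (fun i => S i * N i) (Sum.elim (fun i => T i * N i) N)

@[simp] lemma fmap_mu (i : Fin (n - 1)) : fmap n (Sum.inl i) = S i * N i := rfl
@[simp] lemma fmap_ga (i : Fin (n - 1)) : fmap n (Sum.inr (Sum.inl i)) = T i * N i := rfl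
@[simp] lemma fmap_nu (i : Fin (n - 1)) : fmap n (Sum.inr (Sum.inr i)) = N i := rfl

lemma lift_rels (n : ℕ) : ∀ r ∈ csRels n, FreeGroup.lift (fmap n) r = 1 := by
  rintro r (⟨i, rfl⟩ | ⟨i, j, h, rfl⟩ | ⟨i, j, h, rfl⟩ | ⟨i, j, h, rfl⟩ | ⟨i, j, h, rfl⟩ |
    ⟨i, rfl⟩ | ⟨i, j, hf, a, ha, b, hb, rfl⟩)
  · -- ν² = 1
    simp [csN]
  · -- braid for ν
    simp only [map_mul, map_inv, FreeGroup.lift_apply_of, csN, fmap_nu]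
    rw [mul_inv_eq_one]
    exact hNNN h
  · -- mixed ν μ
    simp only [map_mul, map_inv, FreeGroup.lift_apply_of, csN, csM, fmap_nu, fmap_mu]
    rw [mul_inv_eq_one]
    have e : N i * (S j * N j) * N i = (N i * S j * N i) * (N i * N j * N i) := by
      simp [mul_assoc]
    rw [e, hNSN h, hNNN h]
    simp [mul_assoc]
  · -- mixed ν γ
    simp only [map_mul, map_inv, FreeGroup.lift_apply_of, csN, csG, fmap_nu, fmap_ga]
    rw [mul_inv_eq_one]
    have e : N i * (T j * N j) * N i = (N i * T j * N i) * (N i * N j * N i) := by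
      simp [mul_assoc]
    rw [e, hNTN h, hNNN h]
    simp [mul_assoc]
  · -- relation (5)
    simp only [map_mul, map_inv, FreeGroup.lift_apply_of, csN, csM, csG, fmap_nu, fmap_mu, fmap_ga]
    rw [mul_inv_eq_one]
    have hb' : N i * (N j * N i) = N j * (N i * N j) := by
      simpa [mul_assoc] using hNNN h
    have hA : (S j * N j) * (N j * (S i * N i) * N j) * (T i * N i)
        = T i * (S j * (S i * (N j * (N i * N j)))) := by
      calc (S j * N j) * (N j * (S i * N i) * N j) * (T i * N i)
          = S j * (S i * (N i * (N j * (T i * N i)))) := by simp [mul_assoc]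
        _ = S j * (S i * (T j * (N i * (N j * N i)))) := by rw [moveT' h]
        _ = T i * (S j * (S i * (N i * (N j * N i)))) := by rw [hSST' h.symm]
        _ = T i * (S j * (S i * (N j * (N i * N j)))) := by rw [hb']
    have hB : (T i * N i) * (N j * (S i * N i) * N j) * (S j * N j)
        = T i * (S j * (S i * (N j * (N i * N j)))) := by
      calc (T i * N i) * (N j * (S i * N i) * N j) * (S j * N j)
          = T i * (N i * (N j * (S i * (N i * (N j * (S j * N j)))))) := by simp [mul_assoc]
        _ = T i * (S j * (N i * (N j * (N i * (N j * (S j * N j)))))) := by rw [moveS' h]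
        _ = T i * (S j * (N j * (N i * (N j * (N j * (S j * N j)))))) := by rw [hNNN' h]
        _ = T i * (S j * (N j * (N i * (S j * N j)))) := by rw [Ncan]
        _ = T i * (S j * (S i * (N j * (N i * N j)))) := by rw [moveS' h.symm]
    rw [hA, hB]
  · -- relation (6)
    simp only [map_mul, map_inv, FreeGroup.lift_apply_of, csN, csM, csG, fmap_nu, fmap_mu, fmap_ga]
    rw [mul_inv_eq_one]
    have e : S i * (T i * N i) = T i * (S i * N i) := by
      simp only [← mul_assoc]; rw [hTS]
    calc (S i * N i) * N i * (T i * N i) = S i * (T i * N i) := by simp [mul_assoc]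
      _ = T i * (S i * N i) := e
      _ = (T i * N i) * N i * (S i * N i) := by simp [mul_assoc]
  · -- far commutations
    have mS : vstS n ∈ ({vstS n, vstT n, vstN n} :
        Set (Fin (n - 1) → FreeGroup (VSTGen n))) := by simp
    have mT : vstT n ∈ ({vstS n, vstT n, vstN n} :
        Set (Fin (n - 1) → FreeGroup (VSTGen n))) := by simp
    have mN : vstN n ∈ ({vstS n, vstT n, vstN n} :
        Set (Fin (n - 1) → FreeGroup (VSTGen n))) := by simp
    have cSS : Commute (S i) (S j) := far_comm hf mS mS
    have cST : Commute (S i) (T j) := far_comm hf mS mT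
    have cSN : Commute (S i) (N j) := far_comm hf mS mN
    have cTS : Commute (T i) (S j) := far_comm hf mT mS
    have cTT : Commute (T i) (T j) := far_comm hf mT mT
    have cTN : Commute (T i) (N j) := far_comm hf mT mN
    have cNS : Commute (N i) (S j) := far_comm hf mN mS
    have cNT : Commute (N i) (T j) := far_comm hf mN mT
    have cNN : Commute (N i) (N j) := far_comm hf mN mN
    simp only [Set.mem_insert_iff, Set.mem_singleton_iff] at ha hb
    rcases ha with rfl | rfl | rfl <;> rcases hb with rfl | rfl | rfl <;>
      simp only [map_mul, map_inv, FreeGroup.lift_apply_of, csN, csM, csG, fmap_nu, fmap_mu,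
        fmap_ga] <;> rw [mul_inv_eq_one]
    · exact (cSS.mul_left cNS).mul_right (cSN.mul_left cNN)
    · exact (cST.mul_left cNT).mul_right (cSN.mul_left cNN)
    · exact cSN.mul_left cNN
    · exact (cTS.mul_left cNS).mul_right (cTN.mul_left cNN)
    · exact (cTT.mul_left cNT).mul_right (cTN.mul_left cNN)
    · exact cTN.mul_left cNN
    · exact cNS.mul_right cNN
    · exact cNT.mul_right cNN
    · exact cNN

end CS69
/-- (Part of Theorem 6.9.) There is a surjective group homomorphism from the
connecting-strings presented group `M_n` onto `VST_n`, sending `μ_i ↦ s_i ν_i`,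
`γ_i ↦ τ_i ν_i` and `ν_i ↦ ν_i`. -/
theorem connecting_strings_surjective_hom (n : ℕ) (hn : 2 ≤ n) :
    ∃ F : PresentedGroup (csRels n) →* VST n,
      Function.Surjective F ∧
      ∀ i : Fin (n - 1),
        F (PresentedGroup.of (Sum.inl i))
          = PresentedGroup.of (Sum.inl i) * PresentedGroup.of (Sum.inr (Sum.inr i)) ∧
        F (PresentedGroup.of (Sum.inr (Sum.inl i)))
          = PresentedGroup.of (Sum.inr (Sum.inl i)) *
              PresentedGroup.of (Sum.inr (Sum.inr i)) ∧
        F (PresentedGroup.of (Sum.inr (Sum.inr i)))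
          = PresentedGroup.of (Sum.inr (Sum.inr i)) := by
  refine ⟨PresentedGroup.toGroup (CS69.lift_rels n), ?_, ?_⟩
  · rw [← MonoidHom.range_eq_top, eq_top_iff]
    intro x _
    refine PresentedGroup.generated_by _ _ (fun j => ?_) x
    rcases j with i | i | i
    · refine ⟨PresentedGroup.of (Sum.inl i) * PresentedGroup.of (Sum.inr (Sum.inr i)), ?_⟩
      simp only [map_mul, PresentedGroup.toGroup.of, CS69.fmap_mu, CS69.fmap_nu]
      show CS69.S i * CS69.N i * CS69.N i = CS69.S i
      simp [mul_assoc]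
    · refine ⟨PresentedGroup.of (Sum.inr (Sum.inl i)) *
        PresentedGroup.of (Sum.inr (Sum.inr i)), ?_⟩
      simp only [map_mul, PresentedGroup.toGroup.of, CS69.fmap_ga, CS69.fmap_nu]
      show CS69.T i * CS69.N i * CS69.N i = CS69.T i
      simp [mul_assoc]
    · exact ⟨PresentedGroup.of (Sum.inr (Sum.inr i)), PresentedGroup.toGroup.of _⟩
  · intro i
    exact ⟨PresentedGroup.toGroup.of _, PresentedGroup.toGroup.of _,
      PresentedGroup.toGroup.of _⟩
end
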